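/- arXiv:1408.5532 — 8 statements merged into one kernel-verified Lean document; each statement's English description precedes it below -/
import Mathlib

section
/- Suppose the steplengths γ_{f,k} are nonnegative and diminishing with Σ_k γ_{f,k} = ∞ and Σ_k γ_{f,k}² < ∞, and γ_{g,k} ≡ γ_g is constant with 0 < γ_g < 2/G_g. Then the sequence (x_k, θ_k) generated by the joint gradient scheme satisfies: x_k converges to a point of X* and θ_k → θ* as k → ∞. -/
open Filter Topology RealInnerProductSpace

/-!
The learning iterates `θ k` are projected gradient steps for a strongly convex `g` whose gradient
is `L`-Lipschitz, with step `γ < 2 / L`. The descent lemma gives sufficient decrease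
`g (θ (k+1)) + (1/γ - L/2) ‖θ (k+1) - θ k‖² ≤ g (θ k)`, so `∑ ‖θ (k+1) - θ k‖² < ∞`, and strong
convexity bounds `‖θ k - θ*‖` by a multiple of the step `‖θ (k+1) - θ k‖`; hence
`∑ ‖θ k - θ*‖² < ∞`. The iterates `x k` are then projected gradient steps for `f (·) θ*` with
gradient errors of size `G_{f,θ} ‖θ k - θ*‖`, whose `γ_k`-weighted sum is finite by
Cauchy–Schwarz against `∑ γ_k² < ∞`. For every `z ∈ X` this yields the quasi-Fejér estimate
`‖x (k+1) - z‖² + 2 γ_k (f (x k) - f z) ≤ ‖x k - z‖² + e_k` with `∑ e_k < ∞`: taking `z` a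
minimizer and using `∑ γ_k = ∞` produces a minimizing cluster point, and taking `z` that cluster
point shows that `‖x k - z‖` converges, necessarily to `0`.
-/

lemma summable_of_succ_add_le {a c e : ℕ → ℝ} {m : ℝ} (ha : ∀ k, m ≤ a k)
    (hc : ∀ k, 0 ≤ c k) (he : ∀ k, 0 ≤ e k) (hes : Summable e)
    (h : ∀ k, a (k + 1) + c k ≤ a k + e k) : Summable c := by
  have htel : ∀ K, a K + ∑ k ∈ Finset.range K, c k ≤ a 0 + ∑ k ∈ Finset.range K, e k := by
    intro K
    induction K with
    | zero => simp
    | succ K ih => rw [Finset.sum_range_succ, Finset.sum_range_succ]; linarith [h K]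
  refine summable_of_sum_range_le (c := a 0 - m + ∑' k, e k) hc fun K => ?_
  linarith [htel K, ha K, hes.sum_le_tsum (Finset.range K) fun k _ => he k]

lemma exists_tendsto_of_succ_le_add {a e : ℕ → ℝ} {m : ℝ} (ha : ∀ k, m ≤ a k)
    (he : ∀ k, 0 ≤ e k) (hes : Summable e) (h : ∀ k, a (k + 1) ≤ a k + e k) :
    ∃ l, Tendsto a atTop (𝓝 l) := by
  set b : ℕ → ℝ := fun k => a k - ∑ j ∈ Finset.range k, e j
  have hanti : Antitone b := antitone_nat_of_succ_le fun k => by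
    simp only [b, Finset.sum_range_succ]; linarith [h k]
  have hbdd : BddBelow (Set.range b) := ⟨m - ∑' j, e j, by
    rintro _ ⟨k, rfl⟩
    linarith [ha k, hes.sum_le_tsum (Finset.range k) fun j _ => he j]⟩
  refine ⟨(⨅ k, b k) + ∑' j, e j, ?_⟩
  exact ((tendsto_atTop_ciInf hanti hbdd).add hes.hasSum.tendsto_sum_nat).congr fun k => by
    simp [b]

lemma frequently_lt_of_summable_mul {γ δ : ℕ → ℝ} (hγ : ∀ k, 0 ≤ γ k) (hγs : ¬Summable γ)
    (hs : Summable fun k => γ k * δ k) {ε : ℝ} (hε : 0 < ε) : ∃ᶠ k in atTop, δ k < ε := by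
  by_contra hcon
  simp only [not_frequently, not_lt] at hcon
  refine hγs ((hs.div_const ε).of_norm_bounded_eventually_nat (hcon.mono fun k hk => ?_))
  rw [Real.norm_of_nonneg (hγ k), le_div_iff₀ hε]
  exact mul_le_mul_of_nonneg_left hk (hγ k)

lemma Summable.mul_of_sq {ι : Type*} {a b : ι → ℝ} (ha : Summable fun i => a i ^ 2)
    (hb : Summable fun i => b i ^ 2) : Summable fun i => a i * b i :=
  ((ha.add hb).div_const 2).of_norm_bounded fun i => by
    rw [Real.norm_eq_abs, abs_mul, le_div_iff₀ two_pos]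
    nlinarith [two_mul_le_add_sq |a i| |b i|, sq_abs (a i), sq_abs (b i)]

section FirstOrder

open AffineMap

variable {F : Type*} [NormedAddCommGroup F] [InnerProductSpace ℝ F] [CompleteSpace F]

lemma HasGradientAt.hasDerivAt_comp_lineMap {f : F → ℝ} {G a b : F} {t : ℝ}
    (h : HasGradientAt f G (lineMap a b t)) :
    HasDerivAt (fun s : ℝ => f (lineMap a b s)) ⟪G, b - a⟫ t :=
  h.hasFDerivAt.comp_hasDerivAt t hasDerivAt_lineMap

lemma ConvexOn.add_inner_le_of_hasGradientAt {s : Set F} {f : F → ℝ} (hf : ConvexOn ℝ s f)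
    {a b G : F} (ha : a ∈ s) (hb : b ∈ s) (hG : HasGradientAt f G a) :
    f a + ⟪G, b - a⟫ ≤ f b := by
  have hline : ConvexOn ℝ (Set.Icc 0 1) (fun t : ℝ => f (lineMap a b t)) :=
    (hf.comp_affineMap (lineMap a b)).subset
      (fun t ht => hf.1.lineMap_mem ha hb ht) (convex_Icc 0 1)
  have hderiv := hline.le_slope_of_hasDerivAt (by simp) (by simp) zero_lt_one
    (HasGradientAt.hasDerivAt_comp_lineMap (by simpa using hG))
  simp only [slope_def_field, lineMap_apply_one, lineMap_apply_zero, sub_zero, div_one] at hderiv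
  linarith

lemma ConvexOn.inner_sub_nonneg_of_hasGradientAt {s : Set F} {f : F → ℝ} (hf : ConvexOn ℝ s f)
    {a b Ga Gb : F} (ha : a ∈ s) (hb : b ∈ s) (hGa : HasGradientAt f Ga a)
    (hGb : HasGradientAt f Gb b) : 0 ≤ ⟪Ga - Gb, a - b⟫ := by
  have h₁ := hf.add_inner_le_of_hasGradientAt ha hb hGa
  have h₂ := hf.add_inner_le_of_hasGradientAt hb ha hGb
  rw [← neg_sub a b, inner_neg_right] at h₁
  rw [inner_sub_left]
  linarith

lemma hasGradientAt_norm_sq (a : F) : HasGradientAt (fun y : F => ‖y‖ ^ 2) ((2 : ℝ) • a) a := by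
  rw [hasGradientAt_iff_hasFDerivAt]
  refine (hasStrictFDerivAt_norm_sq a).hasFDerivAt.congr_fderiv ?_
  ext v
  simp [two_smul]

lemma StrongConvexOn.inner_sub_ge_of_hasGradientAt {s : Set F} {f : F → ℝ} {m : ℝ}
    (hf : StrongConvexOn s m f) {a b Ga Gb : F} (ha : a ∈ s) (hb : b ∈ s)
    (hGa : HasGradientAt f Ga a) (hGb : HasGradientAt f Gb b) :
    m * ‖a - b‖ ^ 2 ≤ ⟪Ga - Gb, a - b⟫ := by
  have hgrad : ∀ {c Gc : F}, HasGradientAt f Gc c →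
      HasGradientAt (fun y => f y - m / 2 * ‖y‖ ^ 2) (Gc - m • c) c := by
    intro c Gc hGc
    rw [hasGradientAt_iff_hasFDerivAt] at *
    refine (hGc.sub ((hasGradientAt_norm_sq c).hasFDerivAt.const_mul (m / 2))).congr_fderiv ?_
    ext v
    simp only [map_smul, sub_apply, InnerProductSpace.toDual_apply_apply, smul_apply, smul_eq_mul,
      map_sub, sub_right_inj]
    ring
  have := (strongConvexOn_iff_convex.1 hf).inner_sub_nonneg_of_hasGradientAt ha hb
    (hgrad hGa) (hgrad hGb)
  rw [show Ga - m • a - (Gb - m • b) = (Ga - Gb) - m • (a - b) by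
    rw [smul_sub]; abel, inner_sub_left, real_inner_smul_left, real_inner_self_eq_norm_sq] at this
  linarith

lemma IsMinOn.inner_nonneg_of_hasGradientAt {s : Set F} (hs : Convex ℝ s) {f : F → ℝ} {a G : F}
    (hmin : IsMinOn f s a) (ha : a ∈ s) (hG : HasGradientAt f G a) {b : F} (hb : b ∈ s) :
    0 ≤ ⟪G, b - a⟫ := by
  simpa using hmin.localize.hasFDerivWithinAt_nonneg hG.hasFDerivAt.hasFDerivWithinAt
    (sub_mem_posTangentConeAt_of_segment_subset (hs.segment_subset ha hb))

lemma le_add_inner_add_sq_of_lipschitz_gradient {f : F → ℝ} {G : F → F}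
    (hG : ∀ y, HasGradientAt f (G y) y) {L : ℝ} (hL : ∀ p q, ‖G p - G q‖ ≤ L * ‖p - q‖)
    (a b : F) : f b ≤ f a + ⟪G a, b - a⟫ + L / 2 * ‖b - a‖ ^ 2 := by
  set φ : ℝ → ℝ := fun t => f (lineMap a b t) - t * ⟪G a, b - a⟫ - L / 2 * t ^ 2 * ‖b - a‖ ^ 2
  set φ' : ℝ → ℝ := fun t => ⟪G (lineMap a b t), b - a⟫ - ⟪G a, b - a⟫ - L * t * ‖b - a‖ ^ 2
  have hφ : ∀ t, HasDerivAt φ (φ' t) t := fun t => by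
    refine (((hG _).hasDerivAt_comp_lineMap.sub ((hasDerivAt_id t).mul_const _)).sub
      (((hasDerivAt_pow 2 t).const_mul (L / 2)).mul_const (‖b - a‖ ^ 2))).congr_deriv ?_
    simp only [φ']
    ring
  have hφ'_nonpos : ∀ t ∈ interior (Set.Icc (0 : ℝ) 1), φ' t ≤ 0 := by
    intro t ht
    rw [interior_Icc] at ht
    have hdist : ‖lineMap a b t - a‖ = t * ‖b - a‖ := by
      rw [← vsub_eq_sub, lineMap_vsub_left, norm_smul, Real.norm_of_nonneg ht.1.le, vsub_eq_sub]
    have : ⟪G (lineMap a b t) - G a, b - a⟫ ≤ L * t * ‖b - a‖ ^ 2 :=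
      calc ⟪G (lineMap a b t) - G a, b - a⟫
          ≤ ‖G (lineMap a b t) - G a‖ * ‖b - a‖ := real_inner_le_norm _ _
        _ ≤ L * ‖lineMap a b t - a‖ * ‖b - a‖ :=
          mul_le_mul_of_nonneg_right (hL _ _) (norm_nonneg _)
        _ = L * t * ‖b - a‖ ^ 2 := by rw [hdist]; ring
    simp only [φ', ← inner_sub_left]
    linarith
  have hanti : AntitoneOn φ (Set.Icc 0 1) :=
    antitoneOn_of_hasDerivWithinAt_nonpos (convex_Icc 0 1)
      (fun t _ => (hφ t).continuousAt.continuousWithinAt) (fun t _ => (hφ t).hasDerivWithinAt)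
      hφ'_nonpos
  have := hanti (by simp) (by simp) zero_le_one
  simp only [φ, lineMap_apply_zero, lineMap_apply_one] at this
  linarith

end FirstOrder

section Projection

variable {F : Type*} [NormedAddCommGroup F]

def IsMetricProjection (S : Set F) (P : F → F) : Prop :=
  ∀ y, P y ∈ S ∧ ∀ z ∈ S, ‖y - P y‖ ≤ ‖y - z‖

namespace IsMetricProjection

variable {S : Set F} {P : F → F}

lemma mem (hP : IsMetricProjection S P) (y : F) : P y ∈ S := (hP y).1

variable [InnerProductSpace ℝ F]

lemma inner_sub_nonpos (hP : IsMetricProjection S P) (hS : Convex ℝ S) (y : F) {w : F}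
    (hw : w ∈ S) : ⟪y - P y, w - P y⟫ ≤ 0 := by
  have : Nonempty S := ⟨⟨w, hw⟩⟩
  have hbdd : BddBelow (Set.range fun w : S => ‖y - w‖) :=
    ⟨0, by rintro _ ⟨w, rfl⟩; exact norm_nonneg _⟩
  refine (norm_eq_iInf_iff_real_inner_le_zero hS (hP.mem y)).1 ?_ w hw
  exact le_antisymm (le_ciInf fun w => (hP y).2 w w.2) (ciInf_le hbdd ⟨P y, hP.mem y⟩)

lemma norm_sub_sq_le (hP : IsMetricProjection S P) (hS : Convex ℝ S) (y : F) {z : F}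
    (hz : z ∈ S) : ‖P y - z‖ ^ 2 ≤ ‖y - z‖ ^ 2 := by
  have hVI := hP.inner_sub_nonpos hS y hz
  have hsplit : ‖y - z‖ ^ 2 = ‖y - P y‖ ^ 2 - 2 * ⟪y - P y, z - P y⟫ + ‖P y - z‖ ^ 2 := by
    rw [norm_sub_rev (P y) z, ← norm_sub_sq_real, sub_sub_sub_cancel_right]
  nlinarith [sq_nonneg ‖y - P y‖]

lemma norm_step_sub_sq_le_inner (hP : IsMetricProjection S P) (hS : Convex ℝ S) {y : F}
    (hy : y ∈ S) (t : ℝ) (d : F) :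
    ‖P (y - t • d) - y‖ ^ 2 ≤ t * ⟪d, y - P (y - t • d)⟫ := by
  have hVI := hP.inner_sub_nonpos hS (y - t • d) hy
  rw [show y - t • d - P (y - t • d) = (y - P (y - t • d)) - t • d by abel, inner_sub_left,
    real_inner_self_eq_norm_sq, real_inner_smul_left, norm_sub_rev] at hVI
  linarith [real_inner_comm d (y - P (y - t • d))]

end IsMetricProjection

end Projection

lemma IsCompact.exists_subseq_tendsto_le_of_frequently_lt {E : Type*} [TopologicalSpace E]
    [FirstCountableTopology E] {X : Set E} (hX : IsCompact X) {f : E → ℝ}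
    (hf : ContinuousOn f X) {x : ℕ → E} (hx : ∀ k, x k ∈ X) {xs : E}
    (hfreq : ∀ ε > 0, ∃ᶠ k in atTop, f (x k) - f xs < ε) :
    ∃ xl ∈ X, f xl ≤ f xs ∧ ∃ φ : ℕ → ℕ, StrictMono φ ∧ Tendsto (x ∘ φ) atTop (𝓝 xl) := by
  obtain ⟨φ, hφ, hφlt⟩ :=
    extraction_forall_of_frequently fun N : ℕ => hfreq (1 / (N + 1)) Nat.one_div_pos_of_nat
  obtain ⟨xl, hxl, ψ, hψ, hlim⟩ := hX.tendsto_subseq fun N => hx (φ N)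
  refine ⟨xl, hxl, ?_, φ ∘ ψ, hφ.comp hψ, hlim⟩
  have hfl : Tendsto (fun N => f (x (φ (ψ N)))) atTop (𝓝 (f xl)) :=
    (hf xl hxl).tendsto.comp (tendsto_nhdsWithin_iff.2 ⟨hlim, Eventually.of_forall fun N => hx _⟩)
  have hbound : Tendsto (fun N => f xs + 1 / ((ψ N : ℝ) + 1)) atTop (𝓝 (f xs)) := by
    simpa using (tendsto_one_div_add_atTop_nhds_zero_nat.comp hψ.tendsto_atTop).const_add (f xs)
  exact le_of_tendsto_of_tendsto' hfl hbound fun N => by linarith [hφlt (ψ N)]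

lemma exists_norm_le_of_lipschitz_right {α β E : Type*} [TopologicalSpace α]
    [SeminormedAddCommGroup β] [SeminormedAddCommGroup E] (h : α → β → E) {X : Set α}
    (hX : IsCompact X) {Θ : Set β} (hΘ : Bornology.IsBounded Θ) {θ₀ : β} (hθ₀ : θ₀ ∈ Θ)
    (hcont : ContinuousOn (fun y => h y θ₀) X) {K : ℝ}
    (hK : ∀ y ∈ X, ∀ θ₁ ∈ Θ, ∀ θ₂ ∈ Θ, ‖h y θ₁ - h y θ₂‖ ≤ K * ‖θ₁ - θ₂‖) :
    ∃ C, ∀ y ∈ X, ∀ ϑ ∈ Θ, ‖h y ϑ‖ ≤ C := by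
  obtain ⟨M, hM⟩ := hX.exists_bound_of_continuousOn hcont
  obtain ⟨r, hr⟩ := (Metric.isBounded_iff_subset_closedBall θ₀).1 hΘ
  refine ⟨M + |K| * r, fun y hy ϑ hϑ => ?_⟩
  calc ‖h y ϑ‖ ≤ ‖h y θ₀‖ + ‖h y ϑ - h y θ₀‖ := norm_le_norm_add_norm_sub' _ _
    _ ≤ M + |K| * r := add_le_add (hM y hy) ((hK y hy ϑ hϑ θ₀ hθ₀).trans
        (mul_le_mul (le_abs_self K) (mem_closedBall_iff_norm.1 (hr hϑ)) (norm_nonneg _)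
          (abs_nonneg K)))

theorem exists_tendsto_isMinOn_of_sq_norm_sub_add_le {E : Type*} [NormedAddCommGroup E]
    {X : Set E} (hX : IsCompact X) {f : E → ℝ} (hf : ContinuousOn f X) {x : ℕ → E}
    (hx : ∀ k, x k ∈ X) {γ e : ℕ → ℝ} (hγ : ∀ k, 0 ≤ γ k) (hγs : ¬Summable γ)
    (he : ∀ k, 0 ≤ e k) (hes : Summable e)
    (hrec : ∀ z ∈ X, ∀ k, ‖x (k + 1) - z‖ ^ 2 + γ k * (f (x k) - f z) ≤ ‖x k - z‖ ^ 2 + e k) :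
    ∃ xl ∈ X, IsMinOn f X xl ∧ Tendsto x atTop (𝓝 xl) := by
  obtain ⟨xs, hxs, hmin⟩ := hX.exists_isMinOn ⟨x 0, hx 0⟩ hf
  have hgap : Summable fun k => γ k * (f (x k) - f xs) :=
    summable_of_succ_add_le (a := fun k => ‖x k - xs‖ ^ 2) (m := 0) (fun k => sq_nonneg _)
      (fun k => mul_nonneg (hγ k) (sub_nonneg.2 (hmin (hx k)))) he hes (hrec xs hxs)
  obtain ⟨xl, hxl, hlxs, φ, hφ, hlim⟩ := hX.exists_subseq_tendsto_le_of_frequently_lt hf hx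
    fun ε hε => frequently_lt_of_summable_mul hγ hγs hgap hε
  have hminl : IsMinOn f X xl := isMinOn_iff.2 fun z hz => hlxs.trans (hmin hz)
  obtain ⟨l, hl⟩ := exists_tendsto_of_succ_le_add (a := fun k => ‖x k - xl‖ ^ 2) (m := 0)
    (fun k => sq_nonneg _) he hes fun k => by
      linarith [hrec xl hxl k, mul_nonneg (hγ k) (sub_nonneg.2 (hminl (hx k)))]
  have hl0 : l = 0 := tendsto_nhds_unique (hl.comp hφ.tendsto_atTop)
    (by simpa [Function.comp_def] using (tendsto_iff_norm_sub_tendsto_zero.1 hlim).pow 2)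
  refine ⟨xl, hxl, hminl, tendsto_iff_norm_sub_tendsto_zero.2 ?_⟩
  simpa [hl0] using hl.sqrt

section ProjectedGradient

variable {F : Type*} [NormedAddCommGroup F] [InnerProductSpace ℝ F] [CompleteSpace F]
  {S : Set F} {P : F → F} {g : F → ℝ} {G : F → F} {L η γ : ℝ}

namespace IsMetricProjection

lemma add_sq_norm_step_le (hP : IsMetricProjection S P) (hS : Convex ℝ S)
    (hG : ∀ y, HasGradientAt g (G y) y) (hL : ∀ p q, ‖G p - G q‖ ≤ L * ‖p - q‖) (hγ : 0 < γ)
    {y : F} (hy : y ∈ S) :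
    g (P (y - γ • G y)) + (1 / γ - L / 2) * ‖P (y - γ • G y) - y‖ ^ 2 ≤ g y := by
  have hdesc := le_add_inner_add_sq_of_lipschitz_gradient hG hL y (P (y - γ • G y))
  have hstep := hP.norm_step_sub_sq_le_inner hS hy γ (G y)
  have hinner : ⟪G y, P (y - γ • G y) - y⟫ = -⟪G y, y - P (y - γ • G y)⟫ := by
    rw [← inner_neg_right, neg_sub]
  have : ‖P (y - γ • G y) - y‖ ^ 2 / γ ≤ ⟪G y, y - P (y - γ • G y)⟫ := by
    rw [div_le_iff₀ hγ]; linarith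
  have hsplit : (1 / γ - L / 2) * ‖P (y - γ • G y) - y‖ ^ 2
      = ‖P (y - γ • G y) - y‖ ^ 2 / γ - L / 2 * ‖P (y - γ • G y) - y‖ ^ 2 := by ring
  linarith

lemma sq_mul_norm_sub_le_of_strongConvexOn (hP : IsMetricProjection S P) (hS : Convex ℝ S)
    (hG : ∀ y, HasGradientAt g (G y) y) (hL : ∀ p q, ‖G p - G q‖ ≤ L * ‖p - q‖)
    (hg : StrongConvexOn S η g) (hη : 0 ≤ η) (hγ : 0 < γ) {θs : F} (hθs : θs ∈ S)
    (hmin : IsMinOn g S θs) {y : F} (hy : y ∈ S) :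
    (γ * η * ‖y - θs‖) ^ 2 ≤ ((1 + γ * L) * ‖P (y - γ • G y) - y‖) ^ 2 := by
  set y' := P (y - γ • G y)
  have hVI := hP.inner_sub_nonpos hS (y - γ • G y) hθs
  have hopt := hmin.inner_nonneg_of_hasGradientAt hS hθs (hG θs) (hP.mem (y - γ • G y))
  have hmono := hg.inner_sub_ge_of_hasGradientAt hy hθs (hG y) (hG θs)
  rw [show y - γ • G y - y' = -(y' - y) - γ • G y by abel,
    show θs - y' = -(y' - y) - (y - θs) by abel] at hVI
  rw [show y' - θs = (y' - y) + (y - θs) by abel] at hopt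
  set u := y - θs
  set w := y' - y
  have hcs₁ : -(L * ‖u‖ * ‖w‖) ≤ ⟪G y - G θs, w⟫ :=
    neg_le_of_abs_le ((abs_real_inner_le_norm _ _).trans
      (mul_le_mul_of_nonneg_right (hL y θs) (norm_nonneg _)))
  have hcs₂ : -(‖w‖ * ‖u‖) ≤ ⟪w, u⟫ := neg_le_of_abs_le (abs_real_inner_le_norm _ _)
  -- the projection inequality tested at `θs`, plus `γ` times the optimality condition of `θs`
  have hkey : γ * η * ‖u‖ ^ 2 ≤ (1 + γ * L) * ‖w‖ * ‖u‖ := by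
    simp only [inner_neg_left, inner_sub_right, inner_add_right, inner_neg_right,
      inner_sub_left, real_inner_smul_left, real_inner_self_eq_norm_sq] at hVI hopt hcs₁ hmono
    nlinarith [mul_le_mul_of_nonneg_left hmono hγ.le, mul_le_mul_of_nonneg_left hcs₁ hγ.le,
      mul_nonneg hγ.le hopt, sq_nonneg ‖w‖]
  rcases (norm_nonneg u).eq_or_lt with hu | hu
  · rw [← hu, mul_zero, zero_pow two_ne_zero]; positivity
  · exact pow_le_pow_left₀ (by positivity) (le_of_mul_le_mul_right (by nlinarith) hu) 2

theorem summable_sq_norm_sub_of_strongConvexOn (hP : IsMetricProjection S P)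
    (hS : Convex ℝ S) (hG : ∀ y, HasGradientAt g (G y) y)
    (hL : ∀ p q, ‖G p - G q‖ ≤ L * ‖p - q‖) (hg : StrongConvexOn S η g) (hη : 0 < η)
    (hγ : 0 < γ) (hγL : γ * L < 2) {θs : F} (hθs : θs ∈ S) (hmin : IsMinOn g S θs)
    {θ : ℕ → F} (hθS : ∀ k, θ k ∈ S) (hθ : ∀ k, θ (k + 1) = P (θ k - γ • G (θ k))) :
    Summable fun k => ‖θ k - θs‖ ^ 2 := by
  have hc : 0 < 1 / γ - L / 2 := by
    rw [sub_pos, div_lt_div_iff₀ two_pos hγ]; linarith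
  have hdecr : Summable fun k => (1 / γ - L / 2) * ‖θ (k + 1) - θ k‖ ^ 2 :=
    summable_of_succ_add_le (a := fun k => g (θ k)) (e := 0) (fun k => hmin (hθS k))
      (fun k => by positivity) (fun _ => le_rfl) summable_zero fun k => by
        simpa [hθ k] using hP.add_sq_norm_step_le hS hG hL hγ (hθS k)
  refine (((summable_mul_left_iff hc.ne').1 hdecr).mul_left
    (((1 + γ * L) / (γ * η)) ^ 2)).of_nonneg_of_le (fun k => sq_nonneg _) fun k => ?_
  have := hP.sq_mul_norm_sub_le_of_strongConvexOn hS hG hL hg hη.le hγ hθs hmin (hθS k)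
  rw [← hθ k, mul_pow, mul_pow] at this
  rw [div_pow, div_mul_eq_mul_div, le_div_iff₀ (by positivity), mul_pow]
  linarith

lemma norm_step_sub_sq_add_le (hP : IsMetricProjection S P) (hS : Convex ℝ S) {f : F → ℝ}
    (hf : ConvexOn ℝ S f) {y z Gy : F} (hy : y ∈ S) (hz : z ∈ S) (hGy : HasGradientAt f Gy y)
    (d : F) {t : ℝ} (ht : 0 ≤ t) :
    ‖P (y - t • d) - z‖ ^ 2 + 2 * t * (f y - f z)
      ≤ ‖y - z‖ ^ 2 + 2 * t * (‖d - Gy‖ * ‖y - z‖) + t ^ 2 * ‖d‖ ^ 2 := by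
  have hproj := hP.norm_sub_sq_le hS (y - t • d) hz
  have hexp : ‖y - t • d - z‖ ^ 2 = ‖y - z‖ ^ 2 - 2 * t * ⟪d, y - z⟫ + t ^ 2 * ‖d‖ ^ 2 := by
    rw [show y - t • d - z = (y - z) - t • d by abel, norm_sub_sq_real, real_inner_smul_right,
      norm_smul, mul_pow, Real.norm_eq_abs, sq_abs, real_inner_comm]
    ring
  have hconv := hf.add_inner_le_of_hasGradientAt hy hz hGy
  rw [← neg_sub y z, inner_neg_right] at hconv
  have herr : -(‖d - Gy‖ * ‖y - z‖) ≤ ⟪d - Gy, y - z⟫ :=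
    neg_le_of_abs_le (abs_real_inner_le_norm _ _)
  have hlow : f y - f z - ‖d - Gy‖ * ‖y - z‖ ≤ ⟪d, y - z⟫ := by
    rw [inner_sub_left] at herr; linarith
  nlinarith [mul_le_mul_of_nonneg_left hlow (by positivity : (0 : ℝ) ≤ 2 * t)]

theorem exists_tendsto_isMinOn_of_inexact_gradient (hP : IsMetricProjection S P)
    (hS : IsCompact S) (hSc : Convex ℝ S) {f : F → ℝ} (hf : ConvexOn ℝ S f)
    (hG : ∀ y ∈ S, HasGradientAt f (G y) y) {x d : ℕ → F} (hxS : ∀ k, x k ∈ S)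
    {γ : ℕ → ℝ} (hγ : ∀ k, 0 ≤ γ k) (hγs : ¬Summable γ) (hγsq : Summable fun k => γ k ^ 2)
    {C : ℝ} (hd : ∀ k, ‖d k‖ ≤ C) (herr : Summable fun k => γ k * ‖d k - G (x k)‖)
    (hx : ∀ k, x (k + 1) = P (x k - γ k • d k)) :
    ∃ xl ∈ S, IsMinOn f S xl ∧ Tendsto x atTop (𝓝 xl) := by
  obtain ⟨D, hD⟩ := Metric.isBounded_iff.1 hS.isBounded
  have hD0 : 0 ≤ D := dist_nonneg.trans (hD (hxS 0) (hxS 0))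
  refine exists_tendsto_isMinOn_of_sq_norm_sub_add_le hS
    (fun y hy => (hG y hy).continuousAt.continuousWithinAt) hxS (γ := fun k => 2 * γ k)
    (e := fun k => 2 * D * (γ k * ‖d k - G (x k)‖) + C ^ 2 * γ k ^ 2)
    (fun k => mul_nonneg two_pos.le (hγ k))
    (fun h => hγs ((summable_mul_left_iff two_ne_zero).1 h))
    (fun k => add_nonneg (mul_nonneg (by positivity) (mul_nonneg (hγ k) (norm_nonneg _)))
      (by positivity)) ((herr.mul_left _).add (hγsq.mul_left _)) fun z hz k => ?_
  have hstep := hP.norm_step_sub_sq_add_le hSc hf (hxS k) hz (hG _ (hxS k)) (d k) (hγ k)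
  rw [← hx k] at hstep
  have hdist : γ k * (‖d k - G (x k)‖ * ‖x k - z‖) ≤ D * (γ k * ‖d k - G (x k)‖) := by
    rw [mul_comm D, ← mul_assoc]
    exact mul_le_mul_of_nonneg_left (by simpa [dist_eq_norm] using hD (hxS k) hz)
      (mul_nonneg (hγ k) (norm_nonneg _))
  have hsq : γ k ^ 2 * ‖d k‖ ^ 2 ≤ C ^ 2 * γ k ^ 2 := by
    rw [mul_comm]
    exact mul_le_mul_of_nonneg_right (pow_le_pow_left₀ (norm_nonneg _) (hd k) 2) (sq_nonneg _)
  linarith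

end IsMetricProjection

end ProjectedGradient

theorem stmt_4_general
    {n m : ℕ}
    (X : Set (EuclideanSpace ℝ (Fin n))) (Θ : Set (EuclideanSpace ℝ (Fin m)))
    (hXcp : IsCompact X) (hXcv : Convex ℝ X)
    (hΘcp : IsCompact Θ) (hΘcv : Convex ℝ Θ)
    (f : EuclideanSpace ℝ (Fin n) → EuclideanSpace ℝ (Fin m) → ℝ)
    (g : EuclideanSpace ℝ (Fin m) → ℝ)
    (gradf : EuclideanSpace ℝ (Fin n) → EuclideanSpace ℝ (Fin m) → EuclideanSpace ℝ (Fin n))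
    (gradg : EuclideanSpace ℝ (Fin m) → EuclideanSpace ℝ (Fin m))
    -- continuous differentiability and convexity of f in x
    (hfdiff : ∀ θ' ∈ Θ, ∀ x', HasGradientAt (fun y => f y θ') (gradf x' θ') x')
    (hfgradcont : ∀ θ' ∈ Θ, Continuous (fun x' => gradf x' θ'))
    (hfconv : ∀ θ' ∈ Θ, ConvexOn ℝ X (fun y => f y θ'))
    -- continuous differentiability and strong convexity of g
    (hgdiff : ∀ ϑ, HasGradientAt g (gradg ϑ) ϑ)
    (Gg ηg : ℝ) (hGg : 0 < Gg) (hηg : 0 < ηg)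
    (hstrg : StrongConvexOn Θ ηg g)
    (hLipg : ∀ θ1 θ2, ‖gradg θ1 - gradg θ2‖ ≤ Gg * ‖θ1 - θ2‖)
    -- the minimizer of g
    (θs : EuclideanSpace ℝ (Fin m)) (hθsΘ : θs ∈ Θ) (hθsmin : ∀ ϑ ∈ Θ, g θs ≤ g ϑ)
    -- Lipschitzian assumptions on the gradient map of f
    (Gfθ : ℝ)
    (hLipfθ : ∀ y ∈ X, ∀ θ1 ∈ Θ, ∀ θ2 ∈ Θ,
      ‖gradf y θ1 - gradf y θ2‖ ≤ Gfθ * ‖θ1 - θ2‖)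
    -- Euclidean projections onto X and Θ
    (PX : EuclideanSpace ℝ (Fin n) → EuclideanSpace ℝ (Fin n))
    (PΘ : EuclideanSpace ℝ (Fin m) → EuclideanSpace ℝ (Fin m))
    (hPX : ∀ y, PX y ∈ X ∧ ∀ z ∈ X, ‖y - PX y‖ ≤ ‖y - z‖)
    (hPΘ : ∀ y, PΘ y ∈ Θ ∧ ∀ z ∈ Θ, ‖y - PΘ y‖ ≤ ‖y - z‖)
    -- diminishing optimization steplengths and a constant learning steplength
    (γf : ℕ → ℝ) (hγfnn : ∀ k, 0 ≤ γf k)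
    (hγfdiv : Tendsto (fun K => ∑ k ∈ Finset.range K, γf k) atTop atTop)
    (hγfsq : Summable (fun k => (γf k) ^ 2))
    (γg : ℝ) (hγg0 : 0 < γg) (hγg2 : γg < 2 / Gg)
    -- the joint gradient scheme
    (x : ℕ → EuclideanSpace ℝ (Fin n)) (θ : ℕ → EuclideanSpace ℝ (Fin m))
    (hx0 : x 0 ∈ X) (hθ0 : θ 0 ∈ Θ)
    (hxit : ∀ k, x (k + 1) = PX (x k - γf k • gradf (x k) (θ k)))
    (hθit : ∀ k, θ (k + 1) = PΘ (θ k - γg • gradg (θ k))) :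
    (∃ xl ∈ X, (∀ z ∈ X, f xl θs ≤ f z θs) ∧ Tendsto x atTop (𝓝 xl)) ∧
      Tendsto θ atTop (𝓝 θs) := by
  have hθΘ : ∀ k, θ k ∈ Θ := fun k => k.casesOn hθ0 fun k => hθit k ▸ (hPΘ _).1
  have hxX : ∀ k, x k ∈ X := fun k => k.casesOn hx0 fun k => hxit k ▸ (hPX _).1
  have hθsq : Summable fun k => ‖θ k - θs‖ ^ 2 :=
    IsMetricProjection.summable_sq_norm_sub_of_strongConvexOn hPΘ hΘcv hgdiff hLipg hstrg hηg
      hγg0 ((lt_div_iff₀ hGg).1 hγg2) hθsΘ (isMinOn_iff.2 hθsmin) hθΘ hθit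
  obtain ⟨C, hC⟩ := exists_norm_le_of_lipschitz_right gradf hXcp hΘcp.isBounded hθsΘ
    (hfgradcont θs hθsΘ).continuousOn hLipfθ
  have herr : Summable fun k => γf k * ‖gradf (x k) (θ k) - gradf (x k) θs‖ :=
    ((hγfsq.mul_of_sq hθsq).mul_left Gfθ).of_nonneg_of_le
      (fun k => mul_nonneg (hγfnn k) (norm_nonneg _)) fun k =>
        calc γf k * ‖gradf (x k) (θ k) - gradf (x k) θs‖
            ≤ γf k * (Gfθ * ‖θ k - θs‖) :=
              mul_le_mul_of_nonneg_left (hLipfθ _ (hxX k) _ (hθΘ k) θs hθsΘ) (hγfnn k)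
          _ = Gfθ * (γf k * ‖θ k - θs‖) := by ring
  obtain ⟨xl, hxl, hmin, hlim⟩ :=
    IsMetricProjection.exists_tendsto_isMinOn_of_inexact_gradient hPX hXcp hXcv
      (hfconv θs hθsΘ) (fun y _ => hfdiff θs hθsΘ y) hxX hγfnn
      (fun hs => not_tendsto_atTop_of_tendsto_nhds hs.hasSum.tendsto_sum_nat hγfdiv) hγfsq
      (fun k => hC _ (hxX k) _ (hθΘ k)) herr hxit
  refine ⟨⟨xl, hxl, isMinOn_iff.1 hmin, hlim⟩, tendsto_iff_norm_sub_tendsto_zero.2 ?_⟩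
  simpa using hθsq.tendsto_atTop_zero.sqrt

/-- Convex optimization with strongly convex learning: diminishing steplengths for the
optimization problem and a constant learning steplength yield convergence of `x_k` to a
point of `X*` and of `θ_k` to `θ*`. -/
theorem stmt_4
    {n m : ℕ}
    (X : Set (EuclideanSpace ℝ (Fin n))) (Θ : Set (EuclideanSpace ℝ (Fin m)))
    (hXne : X.Nonempty) (hXcp : IsCompact X) (hXcv : Convex ℝ X)
    (hΘne : Θ.Nonempty) (hΘcp : IsCompact Θ) (hΘcv : Convex ℝ Θ)
    (f : EuclideanSpace ℝ (Fin n) → EuclideanSpace ℝ (Fin m) → ℝ)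
    (g : EuclideanSpace ℝ (Fin m) → ℝ)
    (gradf : EuclideanSpace ℝ (Fin n) → EuclideanSpace ℝ (Fin m) → EuclideanSpace ℝ (Fin n))
    (gradg : EuclideanSpace ℝ (Fin m) → EuclideanSpace ℝ (Fin m))
    -- continuous differentiability and convexity of f in x
    (hfdiff : ∀ θ' ∈ Θ, ∀ x', HasGradientAt (fun y => f y θ') (gradf x' θ') x')
    (hfgradcont : ∀ θ' ∈ Θ, Continuous (fun x' => gradf x' θ'))
    (hfconv : ∀ θ' ∈ Θ, ConvexOn ℝ X (fun y => f y θ'))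
    -- continuous differentiability and strong convexity of g
    (hgdiff : ∀ ϑ, HasGradientAt g (gradg ϑ) ϑ)
    (hggradcont : Continuous gradg)
    (Gg ηg : ℝ) (hGg : 0 < Gg) (hηg : 0 < ηg)
    (hstrg : StrongConvexOn Θ ηg g)
    (hLipg : ∀ θ1 θ2, ‖gradg θ1 - gradg θ2‖ ≤ Gg * ‖θ1 - θ2‖)
    -- the minimizer of g and nonemptiness of X*
    (θs : EuclideanSpace ℝ (Fin m)) (hθsΘ : θs ∈ Θ) (hθsmin : ∀ ϑ ∈ Θ, g θs ≤ g ϑ)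
    (hXstar : ∃ y ∈ X, ∀ z ∈ X, f y θs ≤ f z θs)
    -- Lipschitzian assumptions on the gradient map of f
    (Gfx Gfθ : ℝ) (hGfx : 0 < Gfx)
    (hLipfx : ∀ θ' ∈ Θ, ∀ x1 ∈ X, ∀ x2 ∈ X,
      ‖gradf x1 θ' - gradf x2 θ'‖ ≤ Gfx * ‖x1 - x2‖)
    (hLipfθ : ∀ y ∈ X, ∀ θ1 ∈ Θ, ∀ θ2 ∈ Θ,
      ‖gradf y θ1 - gradf y θ2‖ ≤ Gfθ * ‖θ1 - θ2‖)
    -- Euclidean projections onto X and Θ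
    (PX : EuclideanSpace ℝ (Fin n) → EuclideanSpace ℝ (Fin n))
    (PΘ : EuclideanSpace ℝ (Fin m) → EuclideanSpace ℝ (Fin m))
    (hPX : ∀ y, PX y ∈ X ∧ ∀ z ∈ X, ‖y - PX y‖ ≤ ‖y - z‖)
    (hPΘ : ∀ y, PΘ y ∈ Θ ∧ ∀ z ∈ Θ, ‖y - PΘ y‖ ≤ ‖y - z‖)
    -- diminishing optimization steplengths and a constant learning steplength
    (γf : ℕ → ℝ) (hγfnn : ∀ k, 0 ≤ γf k)
    (hγfdim : Tendsto γf atTop (𝓝 0))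
    (hγfdiv : Tendsto (fun K => ∑ k ∈ Finset.range K, γf k) atTop atTop)
    (hγfsq : Summable (fun k => (γf k) ^ 2))
    (γg : ℝ) (hγg0 : 0 < γg) (hγg2 : γg < 2 / Gg)
    -- the joint gradient scheme
    (x : ℕ → EuclideanSpace ℝ (Fin n)) (θ : ℕ → EuclideanSpace ℝ (Fin m))
    (hx0 : x 0 ∈ X) (hθ0 : θ 0 ∈ Θ)
    (hxit : ∀ k, x (k + 1) = PX (x k - γf k • gradf (x k) (θ k)))
    (hθit : ∀ k, θ (k + 1) = PΘ (θ k - γg • gradg (θ k))) :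
    (∃ xl ∈ X, (∀ z ∈ X, f xl θs ≤ f z θs) ∧ Tendsto x atTop (𝓝 xl)) ∧
      Tendsto θ atTop (𝓝 θs) :=
  stmt_4_general X Θ hXcp hXcv hΘcp hΘcv f g gradf gradg hfdiff hfgradcont hfconv hgdiff Gg ηg hGg
    hηg hstrg hLipg θs hθsΘ hθsmin Gfθ hLipfθ PX PΘ hPX hPΘ γf hγfnn hγfdiv hγfsq γg hγg0 hγg2 x θ
    hx0 hθ0 hxit hθit
end

section
/- Let the learning problem be convex and differentiable with nonempty solution set Θ* satisfying the weak sharpness property, let Θ be bounded, and let the steplengths γ_{g,k} be nonnegative and diminishing with Σ_k γ_{g,k} = ∞ and Σ_k γ_{g,k}² < ∞. Then the sequence θ_{k+1} = Π_Θ(θ_k − γ_{g,k} ∇_θ g(θ_k)) satisfies Σ_{k=1}^∞ γ_{g,k} · dist(θ_k, Θ*) < ∞. -/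
/-!
Take any solution `p ∈ Θ*`. Nonexpansiveness of the projection towards `p`, the gradient
inequality of convex `g` and weak sharpness give the one-step estimate
`2αγ_k·dist(θ_k, Θ*) ≤ ‖θ_k - p‖² - ‖θ_{k+1} - p‖² + C²γ_k²`.
Summing telescopes the first two terms, and `Σ γ_k² < ∞` bounds the rest.
-/

open Filter Topology RealInnerProductSpace Metric

section Convexity

variable {E : Type*} [NormedAddCommGroup E]

lemma ConvexOn.hasFDerivAt_apply_sub_le [NormedSpace ℝ E] {f : E → ℝ} {f' : E →L[ℝ] ℝ}
    {s : Set E} {x y : E} (hf : ConvexOn ℝ s f) (hx : x ∈ s) (hy : y ∈ s)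
    (hf' : HasFDerivAt f f' x) : f' (y - x) ≤ f y - f x := by
  have hline : ConvexOn ℝ (AffineMap.lineMap (k := ℝ) x y ⁻¹' s)
      (f ∘ AffineMap.lineMap (k := ℝ) x y) :=
    hf.comp_affineMap _
  have hderiv : HasDerivAt (f ∘ AffineMap.lineMap (k := ℝ) x y) (f' (y - x)) 0 := by
    refine HasFDerivAt.comp_hasDerivAt (0 : ℝ) ?_ AffineMap.hasDerivAt_lineMap
    simpa using hf'
  simpa [slope_def_field] using
    hline.le_slope_of_hasDerivAt (by simpa using hx) (by simpa using hy) zero_lt_one hderiv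

variable [InnerProductSpace ℝ E]

lemma ConvexOn.sub_le_inner_gradient [CompleteSpace E] {f : E → ℝ} {s : Set E} {x y v : E}
    (hf : ConvexOn ℝ s f) (hx : x ∈ s) (hy : y ∈ s) (hv : HasGradientAt f v x) :
    f x - f y ≤ ⟪v, x - y⟫ := by
  have hfderiv := hf.hasFDerivAt_apply_sub_le hx hy hv.hasFDerivAt
  rw [InnerProductSpace.toDual_apply_apply] at hfderiv
  have hneg : ⟪v, y - x⟫ = -⟪v, x - y⟫ := by rw [← inner_neg_right, neg_sub]
  linarith

lemma Convex.norm_sub_le_of_forall_norm_sub_le {K : Set E} (hK : Convex ℝ K) {y u z : E}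
    (hu : u ∈ K) (hmin : ∀ w ∈ K, ‖y - u‖ ≤ ‖y - w‖) (hz : z ∈ K) : ‖u - z‖ ≤ ‖y - z‖ := by
  have : Nonempty K := ⟨⟨u, hu⟩⟩
  have hinf : ‖y - u‖ = ⨅ w : K, ‖y - w‖ :=
    le_antisymm (le_ciInf fun w => hmin w w.2)
      (ciInf_le (f := fun w : K => ‖y - w‖) ⟨0, by rintro _ ⟨w, rfl⟩; exact norm_nonneg _⟩
        ⟨u, hu⟩)
  have hvar : ⟪y - u, z - u⟫ ≤ 0 := (norm_eq_iInf_iff_real_inner_le_zero hK hu).mp hinf z hz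
  have hexpand : ‖y - z‖ ^ 2 = ‖y - u‖ ^ 2 - 2 * ⟪y - u, z - u⟫ + ‖u - z‖ ^ 2 := by
    rw [show y - z = (y - u) - (z - u) by abel, norm_sub_sq_real, norm_sub_rev u z]
  refine (pow_le_pow_iff_left₀ (norm_nonneg _) (norm_nonneg _) two_ne_zero).mp ?_
  nlinarith [sq_nonneg ‖y - u‖]

lemma norm_sub_sq_projected_step_le {K : Set E} (hK : Convex ℝ K) {P : E → E}
    (hP : ∀ y, P y ∈ K ∧ ∀ z ∈ K, ‖y - P y‖ ≤ ‖y - z‖) {p : E} (hp : p ∈ K) (x v : E) (γ : ℝ) :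
    ‖P (x - γ • v) - p‖ ^ 2 ≤ ‖x - p‖ ^ 2 - 2 * γ * ⟪v, x - p⟫ + γ ^ 2 * ‖v‖ ^ 2 := by
  have hle := hK.norm_sub_le_of_forall_norm_sub_le (hP (x - γ • v)).1 (hP _).2 hp
  calc ‖P (x - γ • v) - p‖ ^ 2 ≤ ‖(x - p) - γ • v‖ ^ 2 := by
        rw [show (x - p) - γ • v = x - γ • v - p by abel]
        exact pow_le_pow_left₀ (norm_nonneg _) hle 2
    _ = ‖x - p‖ ^ 2 - 2 * γ * ⟪v, x - p⟫ + γ ^ 2 * ‖v‖ ^ 2 := by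
        rw [norm_sub_sq_real, real_inner_smul_right, norm_smul, Real.norm_eq_abs, mul_pow,
          sq_abs, real_inner_comm]
        ring

end Convexity

lemma summable_of_le_sub_add {a d c : ℕ → ℝ} (ha : ∀ k, 0 ≤ a k) (hd : ∀ k, 0 ≤ d k)
    (hc : Summable c) (h : ∀ k, a k ≤ d k - d (k + 1) + c k) : Summable a := by
  obtain ⟨B, hB⟩ := hc.hasSum.tendsto_sum_nat.bddAbove_range
  refine summable_of_sum_range_le (c := d 0 + B) ha fun K => ?_
  calc ∑ k ∈ Finset.range K, a k ≤ ∑ k ∈ Finset.range K, (d k - d (k + 1) + c k) :=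
        Finset.sum_le_sum fun k _ => h k
    _ = d 0 - d K + ∑ k ∈ Finset.range K, c k := by
        rw [Finset.sum_add_distrib, Finset.sum_range_sub']
    _ ≤ d 0 + B := by linarith [hd K, hB ⟨K, rfl⟩]

theorem stmt_6_general
    {m : ℕ}
    (Θ : Set (EuclideanSpace ℝ (Fin m)))
    (hΘcv : Convex ℝ Θ)
    (g : EuclideanSpace ℝ (Fin m) → ℝ)
    (gradg : EuclideanSpace ℝ (Fin m) → EuclideanSpace ℝ (Fin m))
    -- continuous differentiability and convexity of g
    (hgdiff : ∀ ϑ, HasGradientAt g (gradg ϑ) ϑ)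
    (hgconv : ConvexOn ℝ Set.univ g)
    -- the gradient of g is bounded on Θ
    (Cg : ℝ) (hgradbdd : ∀ ϑ ∈ Θ, ‖gradg ϑ‖ ≤ Cg)
    -- the solution set Θ*, nonempty and weakly sharp
    (Θstar : Set (EuclideanSpace ℝ (Fin m)))
    (hΘstar : Θstar = {ϑ | ϑ ∈ Θ ∧ ∀ ϑ' ∈ Θ, g ϑ ≤ g ϑ'})
    (hΘstarne : Θstar.Nonempty)
    (α : ℝ) (hα : 0 < α)
    (hws : ∀ ϑ ∈ Θ, ∀ ϑ' ∈ Θstar, α * infDist ϑ Θstar ≤ g ϑ - g ϑ')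
    -- Euclidean projection onto Θ
    (PΘ : EuclideanSpace ℝ (Fin m) → EuclideanSpace ℝ (Fin m))
    (hPΘ : ∀ y, PΘ y ∈ Θ ∧ ∀ z ∈ Θ, ‖y - PΘ y‖ ≤ ‖y - z‖)
    -- diminishing steplengths
    (γg : ℕ → ℝ) (hγgnn : ∀ k, 0 ≤ γg k)
    (hγgsq : Summable (fun k => (γg k) ^ 2))
    -- the projected gradient iterates
    (θ : ℕ → EuclideanSpace ℝ (Fin m)) (hθ0 : θ 0 ∈ Θ)
    (hθit : ∀ k, θ (k + 1) = PΘ (θ k - γg k • gradg (θ k))) :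
    Summable (fun k => γg k * infDist (θ k) Θstar) := by
  have hmem : ∀ k, θ k ∈ Θ
    | 0 => hθ0
    | k + 1 => hθit k ▸ (hPΘ _).1
  obtain ⟨p, hp⟩ := hΘstarne
  have hpΘ : p ∈ Θ := (hΘstar ▸ hp).1
  have hstep : ∀ k, 2 * α * (γg k * infDist (θ k) Θstar)
      ≤ ‖θ k - p‖ ^ 2 - ‖θ (k + 1) - p‖ ^ 2 + Cg ^ 2 * γg k ^ 2 := by
    intro k
    have hsharp : α * infDist (θ k) Θstar ≤ ⟪gradg (θ k), θ k - p⟫ :=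
      (hws _ (hmem k) p hp).trans
        (hgconv.sub_le_inner_gradient trivial trivial (hgdiff (θ k)))
    have hgrad : ‖gradg (θ k)‖ ^ 2 ≤ Cg ^ 2 :=
      pow_le_pow_left₀ (norm_nonneg _) (hgradbdd _ (hmem k)) 2
    have hproj := hθit k ▸ norm_sub_sq_projected_step_le hΘcv hPΘ hpΘ (θ k) (gradg (θ k)) (γg k)
    nlinarith [mul_le_mul_of_nonneg_left hsharp (hγgnn k),
      mul_le_mul_of_nonneg_left hgrad (sq_nonneg (γg k))]
  refine (summable_mul_left_iff (by positivity : 2 * α ≠ 0)).mp ?_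
  exact summable_of_le_sub_add
    (fun k => mul_nonneg (by positivity) (mul_nonneg (hγgnn k) infDist_nonneg))
    (fun k => sq_nonneg _) (hγgsq.mul_left (Cg ^ 2)) hstep

/-- For a convex differentiable learning problem with a weakly sharp solution set, a
bounded feasible set and diminishing steplengths, the projected gradient iterates satisfy
`Σ_k γ_{g,k}·dist(θ_k, Θ*) < ∞`. -/
theorem stmt_6
    {m : ℕ}
    (Θ : Set (EuclideanSpace ℝ (Fin m)))
    (hΘne : Θ.Nonempty) (hΘcl : IsClosed Θ) (hΘcv : Convex ℝ Θ)
    (hΘbdd : Bornology.IsBounded Θ)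
    (g : EuclideanSpace ℝ (Fin m) → ℝ)
    (gradg : EuclideanSpace ℝ (Fin m) → EuclideanSpace ℝ (Fin m))
    -- continuous differentiability and convexity of g
    (hgdiff : ∀ ϑ, HasGradientAt g (gradg ϑ) ϑ)
    (hggradcont : Continuous gradg)
    (hgconv : ConvexOn ℝ Set.univ g)
    -- the gradient of g is bounded on Θ
    (Cg : ℝ) (hgradbdd : ∀ ϑ ∈ Θ, ‖gradg ϑ‖ ≤ Cg)
    -- the solution set Θ*, nonempty and weakly sharp
    (Θstar : Set (EuclideanSpace ℝ (Fin m)))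
    (hΘstar : Θstar = {ϑ | ϑ ∈ Θ ∧ ∀ ϑ' ∈ Θ, g ϑ ≤ g ϑ'})
    (hΘstarne : Θstar.Nonempty)
    (α : ℝ) (hα : 0 < α)
    (hws : ∀ ϑ ∈ Θ, ∀ ϑ' ∈ Θstar, α * infDist ϑ Θstar ≤ g ϑ - g ϑ')
    -- Euclidean projection onto Θ
    (PΘ : EuclideanSpace ℝ (Fin m) → EuclideanSpace ℝ (Fin m))
    (hPΘ : ∀ y, PΘ y ∈ Θ ∧ ∀ z ∈ Θ, ‖y - PΘ y‖ ≤ ‖y - z‖)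
    -- diminishing steplengths
    (γg : ℕ → ℝ) (hγgnn : ∀ k, 0 ≤ γg k)
    (hγgdim : Tendsto γg atTop (𝓝 0))
    (hγgdiv : Tendsto (fun K => ∑ k ∈ Finset.range K, γg k) atTop atTop)
    (hγgsq : Summable (fun k => (γg k) ^ 2))
    -- the projected gradient iterates
    (θ : ℕ → EuclideanSpace ℝ (Fin m)) (hθ0 : θ 0 ∈ Θ)
    (hθit : ∀ k, θ (k + 1) = PΘ (θ k - γg k • gradg (θ k))) :
    Summable (fun k => γg k * infDist (θ k) Θstar) :=
  stmt_6_general Θ hΘcv g gradg hgdiff hgconv Cg hgradbdd Θstar hΘstar hΘstarne α hα hws PΘ hPΘ γg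
    hγgnn hγgsq θ hθ0 hθit
end

section
/- Let (x_k, θ_k) be generated by the joint subgradient scheme. Then for all y ∈ X and all k ≥ 0: ‖x_{k+1} − y‖² ≤ ‖x_k − y‖² − 2γ_{f,k}(f(x_k,θ*) − f(y,θ*)) + 4 L_{f,θ} γ_{f,k} ‖θ_k − θ*‖ + γ_{f,k}² M². -/
/-!
Projecting onto the convex set `X` does not increase the distance to `y ∈ X`, so
`‖x_{k+1} - y‖²` is at most `‖x_k - γ d_k - y‖²`. Expanding this square produces the
term `-2γ ⟪d_k, x_k - y⟫`, which the subgradient inequality bounds by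
`-2γ (f(x_k, θ_k) - f(y, θ_k))`. Replacing `θ_k` by `θ*` in both function values costs
at most `L ‖θ_k - θ*‖` each, because all iterates stay in `Θ`.
-/

open RealInnerProductSpace

section NearestPoint

variable {E : Type*} [NormedAddCommGroup E] [InnerProductSpace ℝ E] {K : Set E}

theorem real_inner_sub_le_zero_of_isMinOn_norm_sub (hK : Convex ℝ K) {v p z : E}
    (hp : p ∈ K) (hmin : ∀ w ∈ K, ‖v - p‖ ≤ ‖v - w‖) (hz : z ∈ K) :
    ⟪v - p, z - p⟫ ≤ 0 := by
  have : Nonempty K := ⟨⟨p, hp⟩⟩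
  have hinf : ‖v - p‖ = ⨅ w : K, ‖v - w‖ :=
    le_antisymm (le_ciInf fun w => hmin w w.2)
      (ciInf_le ⟨0, fun _ ⟨_, h⟩ => h ▸ norm_nonneg _⟩ (⟨p, hp⟩ : K))
  exact (norm_eq_iInf_iff_real_inner_le_zero hK hp).mp hinf z hz

theorem norm_sub_le_of_isMinOn_norm_sub (hK : Convex ℝ K) {v p z : E}
    (hp : p ∈ K) (hmin : ∀ w ∈ K, ‖v - p‖ ≤ ‖v - w‖) (hz : z ∈ K) :
    ‖p - z‖ ≤ ‖v - z‖ := by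
  have hobtuse : 0 ≤ ⟪v - p, p - z⟫ := by
    rw [← neg_sub z p, inner_neg_right, neg_nonneg]
    exact real_inner_sub_le_zero_of_isMinOn_norm_sub hK hp hmin hz
  have hsplit : ‖v - z‖ ^ 2 = ‖v - p‖ ^ 2 + 2 * ⟪v - p, p - z⟫ + ‖p - z‖ ^ 2 := by
    rw [← norm_add_sq_real, sub_add_sub_cancel]
  exact pow_le_pow_iff_left₀ (norm_nonneg _) (norm_nonneg _) two_ne_zero |>.mp
    (by nlinarith [sq_nonneg ‖v - p‖])

theorem norm_sub_smul_sub_sq (x y d : E) (γ : ℝ) :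
    ‖x - γ • d - y‖ ^ 2 = ‖x - y‖ ^ 2 - 2 * γ * ⟪d, x - y⟫ + γ ^ 2 * ‖d‖ ^ 2 := by
  rw [sub_right_comm, norm_sub_sq_real, real_inner_smul_right, norm_smul, mul_pow,
    Real.norm_eq_abs, sq_abs, real_inner_comm]
  ring

theorem norm_projected_step_sub_sq_le (hK : Convex ℝ K) {x d y p : E} {γ : ℝ}
    (hp : p ∈ K) (hmin : ∀ w ∈ K, ‖x - γ • d - p‖ ≤ ‖x - γ • d - w‖) (hy : y ∈ K) :
    ‖p - y‖ ^ 2 ≤ ‖x - y‖ ^ 2 - 2 * γ * ⟪d, x - y⟫ + γ ^ 2 * ‖d‖ ^ 2 := by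
  rw [← norm_sub_smul_sub_sq]
  gcongr
  exact norm_sub_le_of_isMinOn_norm_sub hK hp hmin hy

end NearestPoint

theorem stmt_8_general
    {n m : ℕ}
    (X : Set (EuclideanSpace ℝ (Fin n))) (Θ : Set (EuclideanSpace ℝ (Fin m)))
    (hXcv : Convex ℝ X)
    (f : EuclideanSpace ℝ (Fin n) → EuclideanSpace ℝ (Fin m) → ℝ)
    (gradg : EuclideanSpace ℝ (Fin m) → EuclideanSpace ℝ (Fin m))
    -- convexity of f in x and Lipschitz continuity of f in θ
    (Lfθ : ℝ)
    (hLipf : ∀ y ∈ X, ∀ θ1 ∈ Θ, ∀ θ2 ∈ Θ, |f y θ1 - f y θ2| ≤ Lfθ * ‖θ1 - θ2‖)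
    (θs : EuclideanSpace ℝ (Fin m)) (hθsΘ : θs ∈ Θ)
    -- Euclidean projections onto X and Θ
    (PX : EuclideanSpace ℝ (Fin n) → EuclideanSpace ℝ (Fin n))
    (PΘ : EuclideanSpace ℝ (Fin m) → EuclideanSpace ℝ (Fin m))
    (hPX : ∀ y, PX y ∈ X ∧ ∀ z ∈ X, ‖y - PX y‖ ≤ ‖y - z‖)
    (hPΘ : ∀ y, PΘ y ∈ Θ ∧ ∀ z ∈ Θ, ‖y - PΘ y‖ ≤ ‖y - z‖)
    -- steplengths
    (γf γg : ℕ → ℝ) (hγf : ∀ k, 0 < γf k)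
    -- the joint subgradient scheme
    (x : ℕ → EuclideanSpace ℝ (Fin n)) (θ : ℕ → EuclideanSpace ℝ (Fin m))
    (d : ℕ → EuclideanSpace ℝ (Fin n))
    (hx0 : x 0 ∈ X) (hθ0 : θ 0 ∈ Θ)
    (hsub : ∀ k, ∀ y, f (x k) (θ k) + ⟪d k, y - x k⟫ ≤ f y (θ k))
    (M : ℝ) (hM : ∀ k, ‖d k‖ ≤ M)
    (hxit : ∀ k, x (k + 1) = PX (x k - γf k • d k))
    (hθit : ∀ k, θ (k + 1) = PΘ (θ k - γg k • gradg (θ k))) :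
    ∀ y ∈ X, ∀ k : ℕ,
      ‖x (k + 1) - y‖ ^ 2 ≤
        ‖x k - y‖ ^ 2 - 2 * γf k * (f (x k) θs - f y θs) +
          4 * Lfθ * γf k * ‖θ k - θs‖ + (γf k) ^ 2 * M ^ 2 := by
  intro y hy k
  have hxX : ∀ j, x j ∈ X
    | 0 => hx0
    | j + 1 => hxit j ▸ (hPX _).1
  have hθΘ : ∀ j, θ j ∈ Θ
    | 0 => hθ0
    | j + 1 => hθit j ▸ (hPΘ _).1
  have hstep := norm_projected_step_sub_sq_le hXcv (hxit k ▸ (hPX _).1)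
    (hxit k ▸ (hPX _).2) hy
  have hsubgrad : f (x k) (θ k) - f y (θ k) ≤ ⟪d k, x k - y⟫ := by
    have := hsub k y
    rw [← neg_sub (x k) y, inner_neg_right] at this
    linarith
  have hswap_x := abs_le.mp (hLipf (x k) (hxX k) (θ k) (hθΘ k) θs hθsΘ)
  have hswap_y := abs_le.mp (hLipf y hy (θ k) (hθΘ k) θs hθsΘ)
  have hinner : f (x k) θs - f y θs - 2 * Lfθ * ‖θ k - θs‖ ≤ ⟪d k, x k - y⟫ := by
    linarith [hswap_x.2, hswap_y.1]
  have hd : ‖d k‖ ^ 2 ≤ M ^ 2 := pow_le_pow_left₀ (norm_nonneg _) (hM k) 2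
  linarith [mul_le_mul_of_nonneg_left hinner (by linarith [hγf k] : 0 ≤ 2 * γf k),
    mul_le_mul_of_nonneg_left hd (sq_nonneg (γf k))]

/-- Basic inequality for the joint subgradient scheme: for all `y ∈ X` and all `k`,
`‖x_{k+1} − y‖² ≤ ‖x_k − y‖² − 2γ_{f,k}(f(x_k,θ*) − f(y,θ*)) + 4L_{f,θ}γ_{f,k}‖θ_k − θ*‖
  + γ_{f,k}² M²`. -/
theorem stmt_8
    {n m : ℕ}
    (X : Set (EuclideanSpace ℝ (Fin n))) (Θ : Set (EuclideanSpace ℝ (Fin m)))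
    (hXne : X.Nonempty) (hXcl : IsClosed X) (hXcv : Convex ℝ X)
    (hΘne : Θ.Nonempty) (hΘcl : IsClosed Θ) (hΘcv : Convex ℝ Θ)
    (f : EuclideanSpace ℝ (Fin n) → EuclideanSpace ℝ (Fin m) → ℝ)
    (g : EuclideanSpace ℝ (Fin m) → ℝ)
    (gradg : EuclideanSpace ℝ (Fin m) → EuclideanSpace ℝ (Fin m))
    -- convexity of f in x and Lipschitz continuity of f in θ
    (hfconv : ∀ θ' ∈ Θ, ConvexOn ℝ Set.univ (fun y => f y θ'))
    (Lfθ : ℝ)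
    (hLipf : ∀ y ∈ X, ∀ θ1 ∈ Θ, ∀ θ2 ∈ Θ, |f y θ1 - f y θ2| ≤ Lfθ * ‖θ1 - θ2‖)
    -- continuous differentiability and strong convexity of g, with minimizer θ*
    (hgdiff : ∀ ϑ, HasGradientAt g (gradg ϑ) ϑ)
    (hggradcont : Continuous gradg)
    (ηg : ℝ) (hηg : 0 < ηg) (hstrg : StrongConvexOn Θ ηg g)
    (θs : EuclideanSpace ℝ (Fin m)) (hθsΘ : θs ∈ Θ) (hθsmin : ∀ ϑ ∈ Θ, g θs ≤ g ϑ)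
    -- Euclidean projections onto X and Θ
    (PX : EuclideanSpace ℝ (Fin n) → EuclideanSpace ℝ (Fin n))
    (PΘ : EuclideanSpace ℝ (Fin m) → EuclideanSpace ℝ (Fin m))
    (hPX : ∀ y, PX y ∈ X ∧ ∀ z ∈ X, ‖y - PX y‖ ≤ ‖y - z‖)
    (hPΘ : ∀ y, PΘ y ∈ Θ ∧ ∀ z ∈ Θ, ‖y - PΘ y‖ ≤ ‖y - z‖)
    -- steplengths
    (γf γg : ℕ → ℝ) (hγf : ∀ k, 0 < γf k) (hγg : ∀ k, 0 < γg k)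
    -- the joint subgradient scheme
    (x : ℕ → EuclideanSpace ℝ (Fin n)) (θ : ℕ → EuclideanSpace ℝ (Fin m))
    (d : ℕ → EuclideanSpace ℝ (Fin n))
    (hx0 : x 0 ∈ X) (hθ0 : θ 0 ∈ Θ)
    (hsub : ∀ k, ∀ y, f (x k) (θ k) + ⟪d k, y - x k⟫ ≤ f y (θ k))
    (M : ℝ) (hM : ∀ k, ‖d k‖ ≤ M)
    (hxit : ∀ k, x (k + 1) = PX (x k - γf k • d k))
    (hθit : ∀ k, θ (k + 1) = PΘ (θ k - γg k • gradg (θ k))) :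
    ∀ y ∈ X, ∀ k : ℕ,
      ‖x (k + 1) - y‖ ^ 2 ≤
        ‖x k - y‖ ^ 2 - 2 * γf k * (f (x k) θs - f y θs) +
          4 * Lfθ * γf k * ‖θ k - θs‖ + (γf k) ^ 2 * M ^ 2 :=
  stmt_8_general X Θ hXcv f gradg Lfθ hLipf θs hθsΘ PX PΘ hPX hPΘ γf γg hγf x θ d hx0 hθ0 hsub M hM
    hxit hθit
end

section
/- Suppose the steplengths γ_{f,k} are nonnegative and diminishing with Σ_k γ_{f,k} = ∞ and Σ_k γ_{f,k}² < ∞, and γ_{g,k} ≡ γ_g is constant with 0 < γ_g < 2/G_g. Then the sequence (x_k, θ_k) generated by the joint subgradient scheme satisfies: x_k converges to a point of X* and θ_k → θ* as k → ∞. -/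
/-!
The learning iterates `θ_k` are projected gradient steps for the strongly convex, `G`-smooth `g`.
Sufficient decrease `g θ' + (1/γ - G/2) ‖θ - θ'‖² ≤ g θ`, the gap bound
`g θ' - g θ* ≤ (G + 1/γ) ‖θ - θ'‖ ‖θ' - θ*‖` and quadratic growth of `g` around `θ*` make the gap
`g θ_k - g θ*` contract geometrically, so `∑ ‖θ_k - θ*‖² < ∞`.

For `x_k`, a projected subgradient step for `f(·, θ_k)`, compared with `f(·, θ*)` through the
Lipschitz bound in `θ`, gives for every minimizer `w` of `f(·, θ*)` on `X`
`‖x_{k+1} - w‖² ≤ ‖x_k - w‖² - 2 γ_k (f(x_k, θ*) - f(w, θ*)) + e_k`,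
with `e_k = γ_k² M² + 4 |L| γ_k ‖θ_k - θ*‖` summable. Hence `‖x_k - w‖` converges for every
minimizer `w`, and `∑ γ_k (f(x_k, θ*) - f*) < ∞` with `∑ γ_k = ∞` yields a subsequence along which
`f(x_k, θ*) → f*`; a cluster point `x̄` of it is a minimizer, and convergence of `‖x_k - x̄‖`
forces `x_k → x̄`.
-/

open Filter Topology RealInnerProductSpace Set

def IsNearestPointMap {E : Type*} [NormedAddCommGroup E] (S : Set E) (P : E → E) : Prop :=
  ∀ y, P y ∈ S ∧ ∀ z ∈ S, ‖y - P y‖ ≤ ‖y - z‖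

namespace IsNearestPointMap

variable {E : Type*} [NormedAddCommGroup E] {S : Set E} {P : E → E}

theorem forall_mem_of_succ_eq (hP : IsNearestPointMap S P) {u v : ℕ → E} (h0 : u 0 ∈ S)
    (h : ∀ k, u (k + 1) = P (v k)) : ∀ k, u k ∈ S
  | 0 => h0
  | k + 1 => h k ▸ (hP _).1

variable [InnerProductSpace ℝ E]

theorem inner_sub_le_zero (hP : IsNearestPointMap S P) (hS : Convex ℝ S) (y : E) {z : E}
    (hz : z ∈ S) : ⟪y - P y, z - P y⟫ ≤ 0 := by
  have : Nonempty S := ⟨⟨z, hz⟩⟩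
  have hbdd : BddBelow (range fun w : S => ‖y - (w : E)‖) :=
    ⟨0, by rintro _ ⟨w, rfl⟩; exact norm_nonneg _⟩
  exact (norm_eq_iInf_iff_real_inner_le_zero hS (hP y).1).1 (le_antisymm
    (le_ciInf fun w => (hP y).2 w w.2) (ciInf_le hbdd ⟨P y, (hP y).1⟩)) z hz

theorem norm_sub_le (hP : IsNearestPointMap S P) (hS : Convex ℝ S) (y : E) {w : E}
    (hw : w ∈ S) : ‖P y - w‖ ≤ ‖y - w‖ := by
  have hvi := hP.inner_sub_le_zero hS y hw
  have hsq : ‖y - w‖ ^ 2 = ‖y - P y‖ ^ 2 - 2 * ⟪y - P y, w - P y⟫ + ‖P y - w‖ ^ 2 := by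
    rw [show y - w = (y - P y) - (w - P y) by abel, norm_sub_sq_real,
      show w - P y = -(P y - w) by abel, norm_neg]
  refine le_of_pow_le_pow_left₀ two_ne_zero (norm_nonneg _) ?_
  nlinarith [sq_nonneg ‖y - P y‖]

theorem norm_sub_sq_le_of_subgradient (hP : IsNearestPointMap S P) (hS : Convex ℝ S)
    {F : E → ℝ} {y d : E} (hd : ∀ z, F y + ⟪d, z - y⟫ ≤ F z) {γ : ℝ} (hγ : 0 ≤ γ) {w : E}
    (hw : w ∈ S) :
    ‖P (y - γ • d) - w‖ ^ 2 ≤ ‖y - w‖ ^ 2 - 2 * γ * (F y - F w) + γ ^ 2 * ‖d‖ ^ 2 := by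
  have hFw : F y - F w ≤ ⟪d, y - w⟫ := by
    have := hd w
    rw [show w - y = -(y - w) by abel, inner_neg_right] at this
    linarith
  calc ‖P (y - γ • d) - w‖ ^ 2 ≤ ‖y - γ • d - w‖ ^ 2 := by
        gcongr; exact hP.norm_sub_le hS _ hw
    _ = ‖y - w‖ ^ 2 - 2 * γ * ⟪d, y - w⟫ + γ ^ 2 * ‖d‖ ^ 2 := by
        rw [show y - γ • d - w = (y - w) - γ • d by abel, norm_sub_sq_real, real_inner_smul_right,
          norm_smul, Real.norm_eq_abs, mul_pow, sq_abs, real_inner_comm]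
        ring
    _ ≤ ‖y - w‖ ^ 2 - 2 * γ * (F y - F w) + γ ^ 2 * ‖d‖ ^ 2 := by gcongr

theorem norm_sub_sq_le_of_subgradient_of_abs_sub_le (hP : IsNearestPointMap S P)
    (hS : Convex ℝ S) {F Φ : E → ℝ} {ε : ℝ} (hFΦ : ∀ z ∈ S, |F z - Φ z| ≤ ε) {y d : E}
    (hy : y ∈ S) (hd : ∀ z, F y + ⟪d, z - y⟫ ≤ F z) {γ : ℝ} (hγ : 0 ≤ γ) {w : E} (hw : w ∈ S) :
    ‖P (y - γ • d) - w‖ ^ 2 ≤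
      ‖y - w‖ ^ 2 - 2 * γ * (Φ y - Φ w) + γ ^ 2 * ‖d‖ ^ 2 + 4 * γ * ε := by
  have hy' := abs_le.1 (hFΦ y hy)
  have hw' := abs_le.1 (hFΦ w hw)
  have := hP.norm_sub_sq_le_of_subgradient hS hd hγ hw
  nlinarith

end IsNearestPointMap

theorem StrongConvexOn.sq_norm_sub_le_of_isMinOn {E : Type*} [NormedAddCommGroup E]
    [NormedSpace ℝ E] {s : Set E} {m : ℝ} {g : E → ℝ} (hg : StrongConvexOn s m g) {a b : E}
    (ha : a ∈ s) (hb : b ∈ s) (hmin : IsMinOn g s a) :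
    m / 4 * ‖b - a‖ ^ 2 ≤ g b - g a := by
  have h2 : (0 : ℝ) ≤ 1 / 2 := by norm_num
  have hmid := hg.2 ha hb h2 h2 (add_halves 1)
  have hge : g a ≤ g _ := hmin (hg.1 ha hb h2 h2 (add_halves 1))
  rw [norm_sub_rev] at hmid
  simp only [smul_eq_mul] at hmid hge
  nlinarith

section Gradient

variable {E : Type*} [NormedAddCommGroup E] [InnerProductSpace ℝ E] [CompleteSpace E]
  {g : E → ℝ} {g' : E → E}

theorem HasGradientAt.hasDerivAt_comp_lineMap_s9 {v x y : E} {t : ℝ}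
    (h : HasGradientAt g v (AffineMap.lineMap x y t)) :
    HasDerivAt (g ∘ AffineMap.lineMap x y) ⟪v, y - x⟫ t := by
  simpa using h.hasFDerivAt.comp_hasDerivAt t AffineMap.hasDerivAt_lineMap

theorem ConvexOn.inner_gradient_le_sub {s : Set E} (hgc : ConvexOn ℝ s g) {x z : E}
    (hg : HasGradientAt g (g' x) x) (hx : x ∈ s) (hz : z ∈ s) :
    ⟪g' x, z - x⟫ ≤ g z - g x := by
  have hline : ConvexOn ℝ (AffineMap.lineMap x z ⁻¹' s) (g ∘ AffineMap.lineMap x z) :=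
    hgc.comp_affineMap _
  have := hline.le_slope_of_hasDerivAt (by simpa using hx) (by simpa using hz) zero_lt_one
    (HasGradientAt.hasDerivAt_comp_lineMap_s9 (by simpa using hg))
  simpa [slope_def_field] using this

theorem le_add_inner_gradient_add_sq {G : ℝ} (hg : ∀ x, HasGradientAt g (g' x) x)
    (hG : ∀ a b, ‖g' a - g' b‖ ≤ G * ‖a - b‖) (x y : E) :
    g y ≤ g x + ⟪g' x, y - x⟫ + G / 2 * ‖y - x‖ ^ 2 := by
  have hderiv : ∀ t, HasDerivAt (g ∘ AffineMap.lineMap x y)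
      ⟪g' (AffineMap.lineMap x y t), y - x⟫ t := fun t =>
    (hg _).hasDerivAt_comp_lineMap_s9
  have hB : ∀ t : ℝ, HasDerivAt (fun t => g x + t * ⟪g' x, y - x⟫ + G / 2 * ‖y - x‖ ^ 2 * t ^ 2)
      (⟪g' x, y - x⟫ + G * ‖y - x‖ ^ 2 * t) t := by
    intro t
    have := (((hasDerivAt_id t).mul_const ⟪g' x, y - x⟫).const_add (g x)).add
      ((hasDerivAt_pow 2 t).const_mul (G / 2 * ‖y - x‖ ^ 2))
    exact this.congr_deriv (by ring)
  have key := image_le_of_deriv_right_le_deriv_boundary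
    (fun t _ => (hderiv t).continuousAt.continuousWithinAt) (fun t _ => (hderiv t).hasDerivWithinAt)
    (by simp) (fun t _ => (hB t).continuousAt.continuousWithinAt)
    (fun t _ => (hB t).hasDerivWithinAt) ?_ (right_mem_Icc.2 zero_le_one)
  · simpa using key
  intro t ht
  have hlip : ⟪g' (AffineMap.lineMap x y t) - g' x, y - x⟫ ≤ G * ‖y - x‖ ^ 2 * t := by
    calc _ ≤ ‖g' (AffineMap.lineMap x y t) - g' x‖ * ‖y - x‖ := real_inner_le_norm _ _
      _ ≤ G * ‖AffineMap.lineMap x y t - x‖ * ‖y - x‖ := by gcongr; exact hG _ _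
      _ = G * ‖y - x‖ ^ 2 * t := by
        rw [AffineMap.lineMap_apply_module', add_sub_cancel_right, norm_smul,
          Real.norm_of_nonneg ht.1]
        ring
  rw [inner_sub_left] at hlip
  linarith

end Gradient

section ProjectedGradient

variable {E : Type*} [NormedAddCommGroup E] [InnerProductSpace ℝ E] {Θ : Set E} {P : E → E}
  {g : E → ℝ} {g' : E → E} {G γ : ℝ}

def projGradStep (P g' : E → E) (γ : ℝ) (θ : E) : E :=
  P (θ - γ • g' θ)

theorem projGradStep_mem (hP : IsNearestPointMap Θ P) (θ : E) : projGradStep P g' γ θ ∈ Θ :=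
  (hP _).1

theorem inner_sub_projGradStep_le (hP : IsNearestPointMap Θ P) (hΘ : Convex ℝ Θ) (θ : E) {z : E}
    (hz : z ∈ Θ) :
    ⟪θ - projGradStep P g' γ θ, z - projGradStep P g' γ θ⟫ ≤
      γ * ⟪g' θ, z - projGradStep P g' γ θ⟫ := by
  have := hP.inner_sub_le_zero hΘ (θ - γ • g' θ) hz
  rw [sub_right_comm, inner_sub_left, real_inner_smul_left] at this
  unfold projGradStep
  linarith

variable [CompleteSpace E]

theorem apply_projGradStep_add_le (hP : IsNearestPointMap Θ P) (hΘ : Convex ℝ Θ)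
    (hg : ∀ x, HasGradientAt g (g' x) x) (hG : ∀ a b, ‖g' a - g' b‖ ≤ G * ‖a - b‖) (hγ : 0 < γ)
    {θ : E} (hθ : θ ∈ Θ) :
    g (projGradStep P g' γ θ) + (1 / γ - G / 2) * ‖θ - projGradStep P g' γ θ‖ ^ 2 ≤ g θ := by
  have hvi := inner_sub_projGradStep_le (g' := g') (γ := γ) hP hΘ θ hθ
  have hdesc := le_add_inner_gradient_add_sq hg hG θ (projGradStep P g' γ θ)
  set p := θ - projGradStep P g' γ θ
  rw [real_inner_self_eq_norm_sq] at hvi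
  rw [show projGradStep P g' γ θ - θ = -p by simp only [p]; abel, inner_neg_right,
    norm_neg] at hdesc
  have : ‖p‖ ^ 2 / γ ≤ ⟪g' θ, p⟫ := by rw [div_le_iff₀ hγ]; linarith
  have : (1 / γ - G / 2) * ‖p‖ ^ 2 = ‖p‖ ^ 2 / γ - G / 2 * ‖p‖ ^ 2 := by ring
  linarith

theorem apply_projGradStep_sub_le (hP : IsNearestPointMap Θ P) (hΘ : Convex ℝ Θ)
    (hgc : ConvexOn ℝ Θ g) (hg : ∀ x, HasGradientAt g (g' x) x)
    (hG : ∀ a b, ‖g' a - g' b‖ ≤ G * ‖a - b‖) (hγ : 0 < γ) (θ : E) {w : E} (hw : w ∈ Θ) :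
    g (projGradStep P g' γ θ) - g w ≤
      (G + 1 / γ) * (‖θ - projGradStep P g' γ θ‖ * ‖projGradStep P g' γ θ - w‖) := by
  have hθ' : projGradStep P g' γ θ ∈ Θ := projGradStep_mem hP θ
  have hgrad := hgc.inner_gradient_le_sub (hg _) hθ' hw
  have hvi := inner_sub_projGradStep_le (g' := g') (γ := γ) hP hΘ θ hw
  set p := θ - projGradStep P g' γ θ
  set q := projGradStep P g' γ θ - w
  rw [show w - projGradStep P g' γ θ = -q by simp only [q]; abel, inner_neg_right] at hgrad hvi
  rw [inner_neg_right] at hvi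
  have hlip : ⟪g' (projGradStep P g' γ θ) - g' θ, q⟫ ≤ G * (‖p‖ * ‖q‖) := by
    calc _ ≤ ‖g' (projGradStep P g' γ θ) - g' θ‖ * ‖q‖ := real_inner_le_norm _ _
      _ ≤ G * ‖projGradStep P g' γ θ - θ‖ * ‖q‖ := by gcongr; exact hG _ _
      _ = G * (‖p‖ * ‖q‖) := by rw [norm_sub_rev]; ring
  have : ⟪g' θ, q⟫ ≤ 1 / γ * (‖p‖ * ‖q‖) := by
    rw [one_div_mul_eq_div, le_div_iff₀ hγ]; linarith [real_inner_le_norm p q]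
  rw [inner_sub_left] at hlip
  linarith

theorem exists_apply_projGradStep_sub_le_mul (hP : IsNearestPointMap Θ P) (hΘ : Convex ℝ Θ)
    {η : ℝ} (hη : 0 < η) (hgs : StrongConvexOn Θ η g) (hg : ∀ x, HasGradientAt g (g' x) x)
    (hG : ∀ a b, ‖g' a - g' b‖ ≤ G * ‖a - b‖) (hγ : 0 < γ) (hγG : γ * G < 2)
    {θs : E} (hθs : θs ∈ Θ) (hmin : IsMinOn g Θ θs) :
    ∃ ρ, 0 ≤ ρ ∧ ρ < 1 ∧ ∀ θ ∈ Θ,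
      g (projGradStep P g' γ θ) - g θs ≤ ρ * (g θ - g θs) := by
  set c := 1 / γ - G / 2
  set C := 4 * (G + 1 / γ) ^ 2 / η
  have hc : 0 < c := by
    rw [show c = 1 / γ - G / 2 from rfl, div_sub_div _ _ hγ.ne' two_ne_zero]
    exact div_pos (by linarith) (by positivity)
  have hC : 0 ≤ C := by positivity
  -- `h' + c ‖θ - θ'‖² ≤ h` and `h' ≤ C ‖θ - θ'‖²` for the gaps `h, h'` give `h' ≤ C / (C + c) * h`
  refine ⟨C / (C + c), by positivity, (div_lt_one (by linarith)).2 (by linarith), fun θ hθ => ?_⟩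
  set θ' := projGradStep P g' γ θ
  have hθ' : θ' ∈ Θ := projGradStep_mem hP θ
  have hdec : g θ' + c * ‖θ - θ'‖ ^ 2 ≤ g θ := apply_projGradStep_add_le hP hΘ hg hG hγ hθ
  have hgap := apply_projGradStep_sub_le hP hΘ (hgs.convexOn fun r => by positivity) hg hG hγ θ hθs
  have hgrowth := hgs.sq_norm_sub_le_of_isMinOn hθs hθ' hmin
  have hgapC : g θ' - g θs ≤ C * ‖θ - θ'‖ ^ 2 := by
    have h0 : 0 ≤ g θ' - g θs := sub_nonneg.2 (hmin hθ')
    rcases h0.eq_or_lt with h | h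
    · rw [← h]; positivity
    have hq : ‖θ' - θs‖ ^ 2 ≤ 4 / η * (g θ' - g θs) := by
      rw [div_mul_eq_mul_div, le_div_iff₀ hη]; linarith
    refine le_of_mul_le_mul_right ?_ h
    calc (g θ' - g θs) * (g θ' - g θs)
        ≤ ((G + 1 / γ) * (‖θ - θ'‖ * ‖θ' - θs‖)) ^ 2 := by rw [← sq]; gcongr
      _ = (G + 1 / γ) ^ 2 * ‖θ - θ'‖ ^ 2 * ‖θ' - θs‖ ^ 2 := by ring
      _ ≤ (G + 1 / γ) ^ 2 * ‖θ - θ'‖ ^ 2 * (4 / η * (g θ' - g θs)) := by gcongr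
      _ = C * ‖θ - θ'‖ ^ 2 * (g θ' - g θs) := by ring
  rw [div_mul_eq_mul_div, le_div_iff₀ (by linarith)]
  nlinarith [mul_le_mul_of_nonneg_left hgapC hc.le, mul_le_mul_of_nonneg_left hdec hC]

theorem exists_sq_norm_sub_le_geometric (hP : IsNearestPointMap Θ P) (hΘ : Convex ℝ Θ)
    {η : ℝ} (hη : 0 < η) (hgs : StrongConvexOn Θ η g) (hg : ∀ x, HasGradientAt g (g' x) x)
    (hG : ∀ a b, ‖g' a - g' b‖ ≤ G * ‖a - b‖) (hγ : 0 < γ) (hγG : γ * G < 2)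
    {θs : E} (hθs : θs ∈ Θ) (hmin : IsMinOn g Θ θs) {θ : ℕ → E} (hθ0 : θ 0 ∈ Θ)
    (hθ : ∀ k, θ (k + 1) = projGradStep P g' γ (θ k)) :
    ∃ C ρ : ℝ, 0 ≤ ρ ∧ ρ < 1 ∧ ∀ k, ‖θ k - θs‖ ^ 2 ≤ C * ρ ^ k := by
  obtain ⟨ρ, hρ0, hρ1, hρ⟩ :=
    exists_apply_projGradStep_sub_le_mul hP hΘ hη hgs hg hG hγ hγG hθs hmin
  have hθΘ := hP.forall_mem_of_succ_eq hθ0 hθ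
  have hgap : ∀ k, g (θ k) - g θs ≤ ρ ^ k * (g (θ 0) - g θs) := by
    intro k
    induction k with
    | zero => simp
    | succ k ih =>
      calc g (θ (k + 1)) - g θs ≤ ρ * (g (θ k) - g θs) := hθ k ▸ hρ _ (hθΘ k)
        _ ≤ ρ * (ρ ^ k * (g (θ 0) - g θs)) := by gcongr
        _ = ρ ^ (k + 1) * (g (θ 0) - g θs) := by ring
  refine ⟨4 / η * (g (θ 0) - g θs), ρ, hρ0, hρ1, fun k => ?_⟩
  have hgrowth := hgs.sq_norm_sub_le_of_isMinOn hθs (hθΘ k) hmin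
  calc ‖θ k - θs‖ ^ 2 ≤ 4 / η * (g (θ k) - g θs) := by
        rw [div_mul_eq_mul_div, le_div_iff₀ hη]; linarith
    _ ≤ 4 / η * (ρ ^ k * (g (θ 0) - g θs)) := by gcongr; exact hgap k
    _ = 4 / η * (g (θ 0) - g θs) * ρ ^ k := by ring

end ProjectedGradient

theorem summable_mul_of_summable_sq {ι : Type*} {u v : ι → ℝ} (hu : Summable fun i => u i ^ 2)
    (hv : Summable fun i => v i ^ 2) : Summable fun i => u i * v i :=
  .of_norm_bounded (hu.add hv) fun i => by
    rw [Real.norm_eq_abs, abs_mul, ← sq_abs (u i), ← sq_abs (v i)]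
    nlinarith [sq_nonneg (|u i| - |v i|), abs_nonneg (u i), abs_nonneg (v i)]

theorem exists_tendsto_of_le_add_summable {a e : ℕ → ℝ} (ha : ∀ k, 0 ≤ a k) (he : Summable e)
    (h : ∀ k, a (k + 1) ≤ a k + e k) : ∃ l, Tendsto a atTop (𝓝 l) := by
  have hS := he.hasSum.tendsto_sum_nat
  obtain ⟨B, hB⟩ := hS.bddAbove_range
  have hanti : Antitone fun k => a k - ∑ j ∈ Finset.range k, e j :=
    antitone_nat_of_succ_le fun k => by rw [Finset.sum_range_succ]; linarith [h k]
  have hbdd : BddBelow (range fun k => a k - ∑ j ∈ Finset.range k, e j) :=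
    ⟨-B, by rintro _ ⟨k, rfl⟩; linarith [ha k, hB ⟨k, rfl⟩]⟩
  exact ⟨_, by simpa using (tendsto_atTop_ciInf hanti hbdd).add hS⟩

theorem mapClusterPt_zero_of_summable_mul {γ δ : ℕ → ℝ} (hγ : ∀ k, 0 ≤ γ k) (hγ' : ¬Summable γ)
    (hδ : ∀ k, 0 ≤ δ k) (h : Summable fun k => γ k * δ k) : MapClusterPt 0 atTop δ := by
  rw [mapClusterPt_iff_frequently]
  intro s hs
  obtain ⟨ε, hε, hball⟩ := Metric.mem_nhds_iff.1 hs
  by_contra hfreq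
  refine hγ' (Summable.of_norm_bounded_eventually (h.div_const ε) ?_)
  rw [Nat.cofinite_eq_atTop]
  filter_upwards [not_frequently.1 hfreq] with k hk
  have hεδ : ε ≤ δ k := by
    by_contra hlt
    exact hk (hball (by simpa [abs_of_nonneg (hδ k)] using not_le.1 hlt))
  rw [Real.norm_of_nonneg (hγ k), le_div_iff₀ hε]
  exact mul_le_mul_of_nonneg_left hεδ (hγ k)

section PseudoMetricSpace

variable {X : Type*} [PseudoMetricSpace X]

theorem tendsto_of_tendsto_dist_sq {x : ℕ → X} {b : X}
    (h : Tendsto (fun k => dist (x k) b ^ 2) atTop (𝓝 0)) : Tendsto x atTop (𝓝 b) := by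
  rw [tendsto_iff_dist_tendsto_zero]
  simpa [Real.sqrt_sq dist_nonneg] using h.sqrt

theorem tendsto_of_mapClusterPt_of_tendsto_dist_sq {x : ℕ → X} {b : X} {l : ℝ}
    (hcl : MapClusterPt b atTop x) (h : Tendsto (fun k => dist (x k) b ^ 2) atTop (𝓝 l)) :
    Tendsto x atTop (𝓝 b) := by
  obtain ⟨ψ, hψ, hxψ⟩ := hcl.tendsto_subseq
  have hsub : Tendsto (fun j => dist (x (ψ j)) b ^ 2) atTop (𝓝 0) := by
    simpa using ((tendsto_iff_dist_tendsto_zero.1 hxψ).pow 2)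
  rw [tendsto_nhds_unique (h.comp hψ.tendsto_atTop) hsub] at h
  exact tendsto_of_tendsto_dist_sq h

variable [ProperSpace X] {S : Set X} {φ : X → ℝ} {x : ℕ → X} {γ e : ℕ → ℝ}

theorem exists_isMinOn_mapClusterPt_of_summable_mul (hS : IsClosed S) (hφ : ContinuousOn φ S)
    {a : X} (hmin : IsMinOn φ S a) (hx : ∀ k, x k ∈ S) (hbdd : Bornology.IsBounded (range x))
    (hγ : ∀ k, 0 ≤ γ k) (hγ' : ¬Summable γ) (hsum : Summable fun k => γ k * (φ (x k) - φ a)) :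
    ∃ b ∈ S, IsMinOn φ S b ∧ MapClusterPt b atTop x := by
  have hgap : ∀ k, 0 ≤ φ (x k) - φ a := fun k => sub_nonneg.2 (hmin (hx k))
  obtain ⟨ψ₁, hψ₁, hφψ₁⟩ := (mapClusterPt_zero_of_summable_mul hγ hγ' hgap hsum).tendsto_subseq
  obtain ⟨b, -, ψ₂, hψ₂, hxψ⟩ := tendsto_subseq_of_bounded hbdd fun j => mem_range_self (ψ₁ j)
  have hbS : b ∈ S := hS.mem_of_tendsto hxψ (Eventually.of_forall fun j => hx _)
  have hφb : φ b = φ a := by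
    refine tendsto_nhds_unique ((hφ b hbS).tendsto.comp
      (tendsto_nhdsWithin_iff.2 ⟨hxψ, Eventually.of_forall fun j => hx _⟩)) ?_
    simpa [Function.comp_def] using (hφψ₁.comp hψ₂.tendsto_atTop).add_const (φ a)
  refine ⟨b, hbS, fun z hz => ?_, hxψ.mapClusterPt.of_comp (hψ₁.comp hψ₂).tendsto_atTop⟩
  simpa [hφb] using hmin hz

theorem exists_tendsto_isMinOn_of_dist_sq_le (hS : IsClosed S) (hφ : ContinuousOn φ S) {a : X}
    (ha : a ∈ S) (hmin : IsMinOn φ S a) (hx : ∀ k, x k ∈ S) (hγ : ∀ k, 0 ≤ γ k)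
    (hγ' : ¬Summable γ) (he : Summable e)
    (hstep : ∀ w ∈ S, IsMinOn φ S w → ∀ k,
      dist (x (k + 1)) w ^ 2 ≤ dist (x k) w ^ 2 - 2 * γ k * (φ (x k) - φ w) + e k) :
    ∃ b ∈ S, IsMinOn φ S b ∧ Tendsto x atTop (𝓝 b) := by
  have hconv : ∀ w ∈ S, IsMinOn φ S w → ∃ l, Tendsto (fun k => dist (x k) w ^ 2) atTop (𝓝 l) :=
    fun w hwS hw => exists_tendsto_of_le_add_summable (fun k => sq_nonneg _) he fun k => by
      nlinarith [hstep w hwS hw k, mul_nonneg (hγ k) (sub_nonneg.2 (hw (hx k)))]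
  obtain ⟨l, hl⟩ := hconv a ha hmin
  have hbdd : Bornology.IsBounded (range x) := by
    obtain ⟨R, hR⟩ := hl.bddAbove_range
    refine (Metric.isBounded_closedBall (x := a) (r := √R)).subset ?_
    rintro _ ⟨k, rfl⟩
    exact Real.le_sqrt_of_sq_le (hR ⟨k, rfl⟩)
  have hsum : Summable fun k => γ k * (φ (x k) - φ a) := by
    obtain ⟨B, hB⟩ := he.hasSum.tendsto_sum_nat.bddAbove_range
    have htel : ∀ K, 2 * ∑ k ∈ Finset.range K, γ k * (φ (x k) - φ a) ≤
        dist (x 0) a ^ 2 - dist (x K) a ^ 2 + ∑ k ∈ Finset.range K, e k := by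
      intro K
      induction K with
      | zero => simp
      | succ K ih =>
        rw [Finset.sum_range_succ, Finset.sum_range_succ]
        linarith [hstep a ha hmin K]
    refine summable_of_sum_range_le (c := (dist (x 0) a ^ 2 + B) / 2)
      (fun k => mul_nonneg (hγ k) (sub_nonneg.2 (hmin (hx k)))) fun K => ?_
    linarith [htel K, hB ⟨K, rfl⟩, sq_nonneg (dist (x K) a)]
  obtain ⟨b, hbS, hbmin, hcl⟩ :=
    exists_isMinOn_mapClusterPt_of_summable_mul hS hφ hmin hx hbdd hγ hγ' hsum
  obtain ⟨l', hl'⟩ := hconv b hbS hbmin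
  exact ⟨b, hbS, hbmin, tendsto_of_mapClusterPt_of_tendsto_dist_sq hcl hl'⟩

end PseudoMetricSpace

theorem stmt_9_general
    {n m : ℕ}
    (X : Set (EuclideanSpace ℝ (Fin n))) (Θ : Set (EuclideanSpace ℝ (Fin m)))
    (hXcl : IsClosed X) (hXcv : Convex ℝ X)
    (hΘcv : Convex ℝ Θ)
    (f : EuclideanSpace ℝ (Fin n) → EuclideanSpace ℝ (Fin m) → ℝ)
    (g : EuclideanSpace ℝ (Fin m) → ℝ)
    (gradg : EuclideanSpace ℝ (Fin m) → EuclideanSpace ℝ (Fin m))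
    -- convexity of f in x and Lipschitz continuity of f in θ
    (hfconv : ∀ θ' ∈ Θ, ConvexOn ℝ Set.univ (fun y => f y θ'))
    (Lfθ : ℝ)
    (hLipf : ∀ y ∈ X, ∀ θ1 ∈ Θ, ∀ θ2 ∈ Θ, |f y θ1 - f y θ2| ≤ Lfθ * ‖θ1 - θ2‖)
    -- continuous differentiability and strong convexity of g, with minimizer θ*
    (hgdiff : ∀ ϑ, HasGradientAt g (gradg ϑ) ϑ)
    (ηg Gg : ℝ) (hηg : 0 < ηg) (hGg : 0 < Gg)
    (hstrg : StrongConvexOn Θ ηg g)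
    (hLipg : ∀ θ1 θ2, ‖gradg θ1 - gradg θ2‖ ≤ Gg * ‖θ1 - θ2‖)
    (θs : EuclideanSpace ℝ (Fin m)) (hθsΘ : θs ∈ Θ) (hθsmin : ∀ ϑ ∈ Θ, g θs ≤ g ϑ)
    -- nonemptiness of X*
    (hXstar : ∃ y ∈ X, ∀ z ∈ X, f y θs ≤ f z θs)
    -- Euclidean projections onto X and Θ
    (PX : EuclideanSpace ℝ (Fin n) → EuclideanSpace ℝ (Fin n))
    (PΘ : EuclideanSpace ℝ (Fin m) → EuclideanSpace ℝ (Fin m))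
    (hPX : ∀ y, PX y ∈ X ∧ ∀ z ∈ X, ‖y - PX y‖ ≤ ‖y - z‖)
    (hPΘ : ∀ y, PΘ y ∈ Θ ∧ ∀ z ∈ Θ, ‖y - PΘ y‖ ≤ ‖y - z‖)
    -- diminishing optimization steplengths and a constant learning steplength
    (γf : ℕ → ℝ) (hγfnn : ∀ k, 0 ≤ γf k)
    (hγfdiv : Tendsto (fun K => ∑ k ∈ Finset.range K, γf k) atTop atTop)
    (hγfsq : Summable (fun k => (γf k) ^ 2))
    (γg : ℝ) (hγg0 : 0 < γg) (hγg2 : γg < 2 / Gg)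
    -- the joint subgradient scheme
    (x : ℕ → EuclideanSpace ℝ (Fin n)) (θ : ℕ → EuclideanSpace ℝ (Fin m))
    (d : ℕ → EuclideanSpace ℝ (Fin n))
    (hx0 : x 0 ∈ X) (hθ0 : θ 0 ∈ Θ)
    (hsub : ∀ k, ∀ y, f (x k) (θ k) + ⟪d k, y - x k⟫ ≤ f y (θ k))
    (M : ℝ) (hM : ∀ k, ‖d k‖ ≤ M)
    (hxit : ∀ k, x (k + 1) = PX (x k - γf k • d k))
    (hθit : ∀ k, θ (k + 1) = PΘ (θ k - γg • gradg (θ k))) :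
    (∃ xl ∈ X, (∀ z ∈ X, f xl θs ≤ f z θs) ∧ Tendsto x atTop (𝓝 xl)) ∧
      Tendsto θ atTop (𝓝 θs) := by
  have hPX : IsNearestPointMap X PX := hPX
  have hPΘ : IsNearestPointMap Θ PΘ := hPΘ
  have hθΘ := hPΘ.forall_mem_of_succ_eq hθ0 hθit
  obtain ⟨C, ρ, hρ0, hρ1, hrate⟩ := exists_sq_norm_sub_le_geometric hPΘ hΘcv hηg hstrg hgdiff
    hLipg hγg0 ((lt_div_iff₀ hGg).1 hγg2) hθsΘ hθsmin hθ0 hθit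
  have hθsum : Summable fun k => ‖θ k - θs‖ ^ 2 := .of_nonneg_of_le (fun _ => sq_nonneg _) hrate
    ((summable_geometric_of_lt_one hρ0 hρ1).mul_left C)
  refine ⟨?_, tendsto_of_tendsto_dist_sq (by simpa [dist_eq_norm] using hθsum.tendsto_atTop_zero)⟩
  obtain ⟨xs, hxsX, hxsmin⟩ := hXstar
  have hxX := hPX.forall_mem_of_succ_eq hx0 hxit
  set e := fun k => γf k ^ 2 * M ^ 2 + 4 * |Lfθ| * (γf k * ‖θ k - θs‖)
  have he : Summable e :=
    (hγfsq.mul_right _).add ((summable_mul_of_summable_sq hγfsq hθsum).mul_left _)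
  have hstep : ∀ w ∈ X, IsMinOn (f · θs) X w → ∀ k, dist (x (k + 1)) w ^ 2 ≤
      dist (x k) w ^ 2 - 2 * γf k * (f (x k) θs - f w θs) + e k := by
    intro w hw _ k
    have hfθ : ∀ z ∈ X, |f z (θ k) - f z θs| ≤ |Lfθ| * ‖θ k - θs‖ := fun z hz =>
      (hLipf z hz _ (hθΘ k) θs hθsΘ).trans (by gcongr; exact le_abs_self _)
    have := hPX.norm_sub_sq_le_of_subgradient_of_abs_sub_le hXcv hfθ (hxX k) (hsub k) (hγfnn k) hw
    have hd : γf k ^ 2 * ‖d k‖ ^ 2 ≤ γf k ^ 2 * M ^ 2 := by gcongr; exact hM k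
    rw [← hxit k] at this
    simp only [dist_eq_norm, e]
    linarith
  exact exists_tendsto_isMinOn_of_dist_sq_le hXcl
    (((hfconv θs hθsΘ).continuousOn isOpen_univ).mono (subset_univ X)) hxsX hxsmin hxX hγfnn
    ((not_summable_iff_tendsto_nat_atTop_of_nonneg hγfnn).2 hγfdiv) he hstep

/-- Global convergence of the joint subgradient scheme with diminishing optimization
steplengths and a constant learning steplength: `x_k` converges to a point of `X*` and
`θ_k → θ*`. -/
theorem stmt_9
    {n m : ℕ}
    (X : Set (EuclideanSpace ℝ (Fin n))) (Θ : Set (EuclideanSpace ℝ (Fin m)))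
    (hXne : X.Nonempty) (hXcl : IsClosed X) (hXcv : Convex ℝ X)
    (hΘne : Θ.Nonempty) (hΘcl : IsClosed Θ) (hΘcv : Convex ℝ Θ)
    (f : EuclideanSpace ℝ (Fin n) → EuclideanSpace ℝ (Fin m) → ℝ)
    (g : EuclideanSpace ℝ (Fin m) → ℝ)
    (gradg : EuclideanSpace ℝ (Fin m) → EuclideanSpace ℝ (Fin m))
    -- convexity of f in x and Lipschitz continuity of f in θ
    (hfconv : ∀ θ' ∈ Θ, ConvexOn ℝ Set.univ (fun y => f y θ'))
    (Lfθ : ℝ)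
    (hLipf : ∀ y ∈ X, ∀ θ1 ∈ Θ, ∀ θ2 ∈ Θ, |f y θ1 - f y θ2| ≤ Lfθ * ‖θ1 - θ2‖)
    -- continuous differentiability and strong convexity of g, with minimizer θ*
    (hgdiff : ∀ ϑ, HasGradientAt g (gradg ϑ) ϑ)
    (hggradcont : Continuous gradg)
    (ηg Gg : ℝ) (hηg : 0 < ηg) (hGg : 0 < Gg)
    (hstrg : StrongConvexOn Θ ηg g)
    (hLipg : ∀ θ1 θ2, ‖gradg θ1 - gradg θ2‖ ≤ Gg * ‖θ1 - θ2‖)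
    (θs : EuclideanSpace ℝ (Fin m)) (hθsΘ : θs ∈ Θ) (hθsmin : ∀ ϑ ∈ Θ, g θs ≤ g ϑ)
    -- nonemptiness of X*
    (hXstar : ∃ y ∈ X, ∀ z ∈ X, f y θs ≤ f z θs)
    -- Euclidean projections onto X and Θ
    (PX : EuclideanSpace ℝ (Fin n) → EuclideanSpace ℝ (Fin n))
    (PΘ : EuclideanSpace ℝ (Fin m) → EuclideanSpace ℝ (Fin m))
    (hPX : ∀ y, PX y ∈ X ∧ ∀ z ∈ X, ‖y - PX y‖ ≤ ‖y - z‖)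
    (hPΘ : ∀ y, PΘ y ∈ Θ ∧ ∀ z ∈ Θ, ‖y - PΘ y‖ ≤ ‖y - z‖)
    -- diminishing optimization steplengths and a constant learning steplength
    (γf : ℕ → ℝ) (hγfnn : ∀ k, 0 ≤ γf k)
    (hγfdim : Tendsto γf atTop (𝓝 0))
    (hγfdiv : Tendsto (fun K => ∑ k ∈ Finset.range K, γf k) atTop atTop)
    (hγfsq : Summable (fun k => (γf k) ^ 2))
    (γg : ℝ) (hγg0 : 0 < γg) (hγg2 : γg < 2 / Gg)
    -- the joint subgradient scheme
    (x : ℕ → EuclideanSpace ℝ (Fin n)) (θ : ℕ → EuclideanSpace ℝ (Fin m))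
    (d : ℕ → EuclideanSpace ℝ (Fin n))
    (hx0 : x 0 ∈ X) (hθ0 : θ 0 ∈ Θ)
    (hsub : ∀ k, ∀ y, f (x k) (θ k) + ⟪d k, y - x k⟫ ≤ f y (θ k))
    (M : ℝ) (hM : ∀ k, ‖d k‖ ≤ M)
    (hxit : ∀ k, x (k + 1) = PX (x k - γf k • d k))
    (hθit : ∀ k, θ (k + 1) = PΘ (θ k - γg • gradg (θ k))) :
    (∃ xl ∈ X, (∀ z ∈ X, f xl θs ≤ f z θs) ∧ Tendsto x atTop (𝓝 xl)) ∧
      Tendsto θ atTop (𝓝 θs) :=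
  stmt_9_general X Θ hXcl hXcv hΘcv f g gradg hfconv Lfθ hLipf hgdiff ηg Gg hηg hGg hstrg hLipg θs
    hθsΘ hθsmin hXstar PX PΘ hPX hPΘ γf hγfnn hγfdiv hγfsq γg hγg0 hγg2 x θ d hx0 hθ0 hsub M hM hxit
    hθit
end

section
/- Suppose γ_{g,k} ≡ γ_g is constant with 0 < γ_g < 2/G_g, the steplengths γ_{f,k} are nonnegative and diminishing with Σ_k γ_{f,k} = ∞ and Σ_k γ_{f,k}² < ∞, and define the weighted averages x̄_k = (Σ_{i=0}^k γ_{f,i} x_i)/(Σ_{i=0}^k γ_{f,i}). Then |f(x̄_k, θ_k) − f(x*, θ*)| → 0 as k → ∞. -/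
open Filter Topology RealInnerProductSpace

set_option maxHeartbeats 1000000 in
/-- A nearest-point projection onto a convex set is nonexpansive towards points of the set. -/
lemma proj_nonexp_aux {N : ℕ} {S : Set (EuclideanSpace ℝ (Fin N))}
    (hScv : Convex ℝ S) (P : EuclideanSpace ℝ (Fin N) → EuclideanSpace ℝ (Fin N))
    (hP : ∀ y, P y ∈ S ∧ ∀ z ∈ S, ‖y - P y‖ ≤ ‖y - z‖)
    (y z : EuclideanSpace ℝ (Fin N)) (hz : z ∈ S) :
    ‖P y - z‖ ≤ ‖y - z‖ := by
  haveI : Nonempty S := ⟨⟨P y, (hP y).1⟩⟩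
  have hinf : ‖y - P y‖ = ⨅ w : S, ‖y - (w : EuclideanSpace ℝ (Fin N))‖ := by
    apply le_antisymm
    · exact le_ciInf fun w => (hP y).2 w w.2
    · have hbdd : BddBelow (Set.range fun w : S => ‖y - (w : EuclideanSpace ℝ (Fin N))‖) := by
        refine ⟨0, ?_⟩
        rintro r ⟨w, rfl⟩; exact norm_nonneg _
      exact ciInf_le hbdd ⟨P y, (hP y).1⟩
  have hobtuse : ⟪y - P y, z - P y⟫ ≤ 0 :=
    (norm_eq_iInf_iff_real_inner_le_zero hScv (hP y).1).mp hinf z hz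
  have hexp : ‖y - z‖ ^ 2 = ‖y - P y‖ ^ 2 + 2 * ⟪y - P y, P y - z⟫ + ‖P y - z‖ ^ 2 := by
    have h : y - z = (y - P y) + (P y - z) := by abel
    rw [h, norm_add_sq_real]
  have hip : 0 ≤ ⟪y - P y, P y - z⟫ := by
    have : ⟪y - P y, P y - z⟫ = -⟪y - P y, z - P y⟫ := by
      rw [← inner_neg_right]; congr 1; abel
    linarith [this ▸ neg_nonneg.mpr hobtuse]
  have hsq : ‖P y - z‖ ^ 2 ≤ ‖y - z‖ ^ 2 := by nlinarith [sq_nonneg ‖y - P y‖]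
  nlinarith [norm_nonneg (P y - z), norm_nonneg (y - z)]

set_option maxHeartbeats 1000000 in
/-- Joint subgradient scheme with weighted averaging and diminishing steplengths:
`|f(x̄_k, θ_k) − f(x*, θ*)| → 0`. -/
theorem stmt_10
    {n m : ℕ}
    (X : Set (EuclideanSpace ℝ (Fin n))) (Θ : Set (EuclideanSpace ℝ (Fin m)))
    (hXne : X.Nonempty) (hXcl : IsClosed X) (hXcv : Convex ℝ X)
    (hΘne : Θ.Nonempty) (hΘcl : IsClosed Θ) (hΘcv : Convex ℝ Θ)
    (f : EuclideanSpace ℝ (Fin n) → EuclideanSpace ℝ (Fin m) → ℝ)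
    (g : EuclideanSpace ℝ (Fin m) → ℝ)
    (gradg : EuclideanSpace ℝ (Fin m) → EuclideanSpace ℝ (Fin m))
    -- convexity of f in x and Lipschitz continuity of f in θ
    (hfconv : ∀ θ' ∈ Θ, ConvexOn ℝ Set.univ (fun y => f y θ'))
    (Lfθ : ℝ)
    (hLipf : ∀ y ∈ X, ∀ θ1 ∈ Θ, ∀ θ2 ∈ Θ, |f y θ1 - f y θ2| ≤ Lfθ * ‖θ1 - θ2‖)
    -- the minimizer x* of f(·,θ*) over X
    (θs : EuclideanSpace ℝ (Fin m))
    (xs : EuclideanSpace ℝ (Fin n)) (hxsX : xs ∈ X) (hxsmin : ∀ z ∈ X, f xs θs ≤ f z θs)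
    -- continuous differentiability and strong convexity of g, with minimizer θ*
    (hgdiff : ∀ ϑ, HasGradientAt g (gradg ϑ) ϑ)
    (hggradcont : Continuous gradg)
    (ηg Gg : ℝ) (hηg : 0 < ηg) (hGg : 0 < Gg)
    (hstrg : StrongConvexOn Θ ηg g)
    (hLipg : ∀ θ1 θ2, ‖gradg θ1 - gradg θ2‖ ≤ Gg * ‖θ1 - θ2‖)
    (hθsΘ : θs ∈ Θ) (hθsmin : ∀ ϑ ∈ Θ, g θs ≤ g ϑ)
    -- Euclidean projections onto X and Θ
    (PX : EuclideanSpace ℝ (Fin n) → EuclideanSpace ℝ (Fin n))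
    (PΘ : EuclideanSpace ℝ (Fin m) → EuclideanSpace ℝ (Fin m))
    (hPX : ∀ y, PX y ∈ X ∧ ∀ z ∈ X, ‖y - PX y‖ ≤ ‖y - z‖)
    (hPΘ : ∀ y, PΘ y ∈ Θ ∧ ∀ z ∈ Θ, ‖y - PΘ y‖ ≤ ‖y - z‖)
    -- diminishing optimization steplengths and a constant learning steplength
    (γf : ℕ → ℝ) (hγfnn : ∀ k, 0 ≤ γf k)
    (hγfdim : Tendsto γf atTop (𝓝 0))
    (hγfdiv : Tendsto (fun K => ∑ k ∈ Finset.range K, γf k) atTop atTop)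
    (hγfsq : Summable (fun k => (γf k) ^ 2))
    (γg : ℝ) (hγg0 : 0 < γg) (hγg2 : γg < 2 / Gg)
    -- the joint subgradient scheme
    (x : ℕ → EuclideanSpace ℝ (Fin n)) (θ : ℕ → EuclideanSpace ℝ (Fin m))
    (d : ℕ → EuclideanSpace ℝ (Fin n))
    (hx0 : x 0 ∈ X) (hθ0 : θ 0 ∈ Θ)
    (hsub : ∀ k, ∀ y, f (x k) (θ k) + ⟪d k, y - x k⟫ ≤ f y (θ k))
    (M : ℝ) (hM : ∀ k, ‖d k‖ ≤ M)
    (hxit : ∀ k, x (k + 1) = PX (x k - γf k • d k))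
    (hθit : ∀ k, θ (k + 1) = PΘ (θ k - γg • gradg (θ k)))
    -- geometric decay of the learning error
    (qg : ℝ) (hqg0 : 0 < qg) (hqg1 : qg < 1)
    (hθrate : ∀ k, ‖θ k - θs‖ ≤ qg ^ k * ‖θ 0 - θs‖)
    -- the weighted averaged iterates
    (xbar : ℕ → EuclideanSpace ℝ (Fin n))
    (hxbar : ∀ k, xbar k =
      (∑ i ∈ Finset.range (k + 1), γf i)⁻¹ • ∑ i ∈ Finset.range (k + 1), γf i • x i) :
    Tendsto (fun k => |f (xbar k) (θ k) - f xs θs|) atTop (𝓝 0) := by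
  -- notation
  set L : ℝ := max Lfθ 0 with hLdef
  have hL0 : 0 ≤ L := le_max_right _ _
  have hLip' : ∀ y ∈ X, ∀ θ1 ∈ Θ, ∀ θ2 ∈ Θ, |f y θ1 - f y θ2| ≤ L * ‖θ1 - θ2‖ := by
    intro y hy θ1 h1 θ2 h2
    exact le_trans (hLipf y hy θ1 h1 θ2 h2)
      (mul_le_mul_of_nonneg_right (le_max_left _ _) (norm_nonneg _))
  set B : ℝ := ‖θ 0 - θs‖ with hBdef
  have hB0 : 0 ≤ B := norm_nonneg _
  -- membership of iterates
  have hxX : ∀ k, x k ∈ X := by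
    intro k; induction k with
    | zero => exact hx0
    | succ k _ => rw [hxit k]; exact (hPX _).1
  have hθΘ : ∀ k, θ k ∈ Θ := by
    intro k; induction k with
    | zero => exact hθ0
    | succ k _ => rw [hθit k]; exact (hPΘ _).1
  have hM0 : 0 ≤ M := le_trans (norm_nonneg _) (hM 0)
  -- errors
  set e : ℕ → ℝ := fun k => ‖x k - xs‖ ^ 2 with hedef
  have he0 : ∀ k, 0 ≤ e k := fun k => sq_nonneg _
  set s : ℕ → ℝ := fun k => f (x k) (θ k) - f xs θs with hsdef
  -- geometric bound on learning error
  have hbθ : ∀ k, ‖θ k - θs‖ ≤ qg ^ k * B := hθrate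
  have hq2lt : qg ^ 2 < 1 := by nlinarith
  have hq20 : (0:ℝ) ≤ qg ^ 2 := sq_nonneg _
  have hgeo : Summable (fun k : ℕ => (qg ^ 2) ^ k) := summable_geometric_of_lt_one hq20 hq2lt
  set S : ℝ := ∑' k, (γf k) ^ 2 with hSdef
  set T : ℝ := ∑' k : ℕ, (qg ^ 2) ^ k with hTdef
  have hS0 : 0 ≤ S := tsum_nonneg fun k => sq_nonneg _
  have hT0 : 0 ≤ T := tsum_nonneg fun k => pow_nonneg hq20 _
  have hSsum : ∀ K, ∑ k ∈ Finset.range K, (γf k) ^ 2 ≤ S :=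
    fun K => Summable.sum_le_tsum _ (fun k _ => sq_nonneg _) hγfsq
  have hTsum : ∀ K, ∑ k ∈ Finset.range K, (qg ^ 2) ^ k ≤ T :=
    fun K => Summable.sum_le_tsum _ (fun k _ => pow_nonneg hq20 _) hgeo
  -- per-step key inequality
  have hkey : ∀ k, 2 * (γf k * s k) ≤
      (e k - e (k + 1)) + M ^ 2 * (γf k) ^ 2 + L * ((γf k) ^ 2 + B ^ 2 * (qg ^ 2) ^ k) := by
    intro k
    -- contraction of the projected step
    have hstep : e (k + 1) ≤ e k - 2 * γf k * ⟪d k, x k - xs⟫ + (γf k) ^ 2 * M ^ 2 := by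
      have hproj : ‖x (k + 1) - xs‖ ≤ ‖(x k - γf k • d k) - xs‖ := by
        rw [hxit k]; exact proj_nonexp_aux hXcv PX hPX _ xs hxsX
      have hsq : e (k + 1) ≤ ‖(x k - γf k • d k) - xs‖ ^ 2 := by
        have h' : e (k + 1) = ‖x (k + 1) - xs‖ ^ 2 := rfl
        rw [h']
        nlinarith [hproj, norm_nonneg (x (k+1) - xs)]
      have hrw : (x k - γf k • d k) - xs = (x k - xs) - γf k • d k := by abel
      have hexp : ‖(x k - xs) - γf k • d k‖ ^ 2
          = e k - 2 * (γf k * ⟪x k - xs, d k⟫) + (γf k) ^ 2 * ‖d k‖ ^ 2 := by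
        show _ = ‖x k - xs‖ ^ 2 - _ + _
        rw [norm_sub_sq_real, real_inner_smul_right, norm_smul, mul_pow,
          Real.norm_eq_abs, sq_abs]
        try ring
      have hdM : ‖d k‖ ^ 2 ≤ M ^ 2 := by nlinarith [hM k, norm_nonneg (d k)]
      have hγ2 : (0:ℝ) ≤ (γf k) ^ 2 := sq_nonneg _
      have hcomm : ⟪x k - xs, d k⟫ = ⟪d k, x k - xs⟫ := real_inner_comm _ _
      calc e (k + 1) ≤ ‖(x k - xs) - γf k • d k‖ ^ 2 := by rwa [hrw] at hsq
        _ = e k - 2 * (γf k * ⟪x k - xs, d k⟫) + (γf k) ^ 2 * ‖d k‖ ^ 2 := hexp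
        _ ≤ e k - 2 * γf k * ⟪d k, x k - xs⟫ + (γf k) ^ 2 * M ^ 2 := by
            rw [hcomm]; nlinarith [mul_le_mul_of_nonneg_left hdM hγ2]
    -- subgradient inequality
    have hsg : f (x k) (θ k) - f xs (θ k) ≤ ⟪d k, x k - xs⟫ := by
      have := hsub k xs
      have hi : ⟪d k, xs - x k⟫ = -⟪d k, x k - xs⟫ := by
        rw [← inner_neg_right]; congr 1; abel
      rw [hi] at this; linarith
    -- Lipschitz transfer to θs
    have hlip : f xs (θ k) - f xs θs ≤ L * (qg ^ k * B) := by
      have h1 := hLip' xs hxsX (θ k) (hθΘ k) θs hθsΘ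
      have h2 : L * ‖θ k - θs‖ ≤ L * (qg ^ k * B) :=
        mul_le_mul_of_nonneg_left (hbθ k) hL0
      have := abs_le.mp h1
      linarith [this.2]
    have hγ : 0 ≤ γf k := hγfnn k
    have hmul : 2 * γf k * (f (x k) (θ k) - f xs (θ k)) ≤ 2 * γf k * ⟪d k, x k - xs⟫ :=
      mul_le_mul_of_nonneg_left hsg (by linarith)
    have hmul2 : 2 * γf k * (L * (qg ^ k * B)) ≤ L * ((γf k) ^ 2 + B ^ 2 * (qg ^ 2) ^ k) := by
      have hab : 2 * (γf k * (qg ^ k * B)) ≤ (γf k) ^ 2 + (qg ^ k * B) ^ 2 := by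
        nlinarith [sq_nonneg (γf k - qg ^ k * B)]
      have hq : (qg ^ k * B) ^ 2 = B ^ 2 * (qg ^ 2) ^ k := by
        rw [mul_pow, ← pow_mul, ← pow_mul]; ring
      nlinarith [mul_le_mul_of_nonneg_left hab hL0]
    have hsplit : s k = (f (x k) (θ k) - f xs (θ k)) + (f xs (θ k) - f xs θs) := by
      show f (x k) (θ k) - f xs θs = _
      ring
    rw [hsplit]
    nlinarith [hstep, hmul, hmul2,
      mul_le_mul_of_nonneg_left hlip (by linarith : (0:ℝ) ≤ 2 * γf k)]
  -- summed inequality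
  set C : ℝ := e 0 + M ^ 2 * S + L * (S + B ^ 2 * T) with hCdef
  have hCsum : ∀ K, ∑ k ∈ Finset.range K, (γf k * s k) ≤ C / 2 := by
    intro K
    have h1 : ∑ k ∈ Finset.range K, (2 * (γf k * s k)) ≤
        ∑ k ∈ Finset.range K, ((e k - e (k + 1)) + M ^ 2 * (γf k) ^ 2
          + L * ((γf k) ^ 2 + B ^ 2 * (qg ^ 2) ^ k)) :=
      Finset.sum_le_sum fun k _ => hkey k
    have htel : ∑ k ∈ Finset.range K, (e k - e (k + 1)) = e 0 - e K :=
      Finset.sum_range_sub' e K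
    have h2 : ∑ k ∈ Finset.range K, ((e k - e (k + 1)) + M ^ 2 * (γf k) ^ 2
          + L * ((γf k) ^ 2 + B ^ 2 * (qg ^ 2) ^ k))
        = (e 0 - e K) + M ^ 2 * (∑ k ∈ Finset.range K, (γf k) ^ 2)
          + L * ((∑ k ∈ Finset.range K, (γf k) ^ 2)
            + B ^ 2 * (∑ k ∈ Finset.range K, (qg ^ 2) ^ k)) := by
      rw [← htel]
      simp [Finset.sum_add_distrib, Finset.mul_sum, mul_add]
    rw [h2] at h1
    have h3 : ∑ k ∈ Finset.range K, (2 * (γf k * s k))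
        = 2 * ∑ k ∈ Finset.range K, (γf k * s k) := by rw [Finset.mul_sum]
    rw [h3] at h1
    have hM2 : (0:ℝ) ≤ M ^ 2 := sq_nonneg _
    have hB2 : (0:ℝ) ≤ B ^ 2 := sq_nonneg _
    have hb1 := mul_le_mul_of_nonneg_left (hSsum K) hM2
    have hb2 := mul_le_mul_of_nonneg_left (hTsum K) hB2
    have hb3 : L * ((∑ k ∈ Finset.range K, (γf k) ^ 2)
          + B ^ 2 * (∑ k ∈ Finset.range K, (qg ^ 2) ^ k)) ≤ L * (S + B ^ 2 * T) := by
      apply mul_le_mul_of_nonneg_left _ hL0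
      linarith [hSsum K]
    have := he0 K
    simp only [hCdef]
    linarith
  -- weighted learning-error sum
  set D : ℝ := (S + B ^ 2 * T) / 2 with hDdef
  have hD0 : 0 ≤ D := by
    have : (0:ℝ) ≤ B ^ 2 * T := mul_nonneg (sq_nonneg _) hT0
    simp only [hDdef]; linarith
  have hDsum : ∀ K, ∑ k ∈ Finset.range K, (γf k * (qg ^ k * B)) ≤ D := by
    intro K
    have h1 : ∀ k ∈ Finset.range K, γf k * (qg ^ k * B)
        ≤ ((γf k) ^ 2 + B ^ 2 * (qg ^ 2) ^ k) / 2 := by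
      intro k _
      have hq : (qg ^ k * B) ^ 2 = B ^ 2 * (qg ^ 2) ^ k := by
        rw [mul_pow, ← pow_mul, ← pow_mul]; ring
      nlinarith [sq_nonneg (γf k - qg ^ k * B)]
    calc ∑ k ∈ Finset.range K, (γf k * (qg ^ k * B))
        ≤ ∑ k ∈ Finset.range K, ((γf k) ^ 2 + B ^ 2 * (qg ^ 2) ^ k) / 2 :=
          Finset.sum_le_sum h1
      _ = ((∑ k ∈ Finset.range K, (γf k) ^ 2)
            + B ^ 2 * (∑ k ∈ Finset.range K, (qg ^ 2) ^ k)) / 2 := by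
          rw [← Finset.sum_div, Finset.sum_add_distrib, Finset.mul_sum]
      _ ≤ D := by
          have hb2 := mul_le_mul_of_nonneg_left (hTsum K) (sq_nonneg B)
          simp only [hDdef]; linarith [hSsum K]
  have hC0 : 0 ≤ C := by
    have h1 : (0:ℝ) ≤ M ^ 2 * S := mul_nonneg (sq_nonneg _) hS0
    have h2 : (0:ℝ) ≤ L * (S + B ^ 2 * T) :=
      mul_nonneg hL0 (by nlinarith [mul_nonneg (sq_nonneg B) hT0])
    simp only [hCdef]; linarith [he0 0]
  set E : ℝ := C / 2 + L * D with hEdef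
  have hE0 : 0 ≤ E := by
    have := mul_nonneg hL0 hD0; simp only [hEdef]; linarith
  -- partial sums of steplengths
  set A : ℕ → ℝ := fun K => ∑ i ∈ Finset.range (K + 1), γf i with hAdef
  have hAtop : Tendsto A atTop atTop := by
    have := hγfdiv.comp (tendsto_add_atTop_nat 1)
    exact this
  -- the eventual bound
  have hbound : ∀ K, 0 < A K → |f (xbar K) (θ K) - f xs θs| ≤ (A K)⁻¹ * E + L * (qg ^ K * B) := by
    intro K hA
    have hAinv0 : 0 ≤ (A K)⁻¹ := le_of_lt (inv_pos.mpr hA)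
    set w : ℕ → ℝ := fun i => (A K)⁻¹ * γf i with hwdef
    have hw0 : ∀ i ∈ Finset.range (K + 1), 0 ≤ w i :=
      fun i _ => mul_nonneg hAinv0 (hγfnn i)
    have hw1 : ∑ i ∈ Finset.range (K + 1), w i = 1 := by
      simp only [hwdef, ← Finset.mul_sum]
      exact inv_mul_cancel₀ (ne_of_gt hA)
    have hxbarw : xbar K = ∑ i ∈ Finset.range (K + 1), w i • x i := by
      rw [hxbar K, Finset.smul_sum]
      refine Finset.sum_congr rfl fun i _ => ?_
      show (A K)⁻¹ • γf i • x i = ((A K)⁻¹ * γf i) • x i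
      rw [smul_smul]
    -- xbar K ∈ X
    have hxbarX : xbar K ∈ X := by
      rw [hxbarw]
      exact hXcv.sum_mem hw0 hw1 fun i _ => hxX i
    -- Jensen
    have hjensen : f (xbar K) (θ K) ≤ ∑ i ∈ Finset.range (K + 1), w i * f (x i) (θ K) := by
      rw [hxbarw]
      exact (hfconv (θ K) (hθΘ K)).map_sum_le hw0 hw1 fun i _ => Set.mem_univ _
    -- pointwise Lipschitz transfer
    have hpt : ∀ i ∈ Finset.range (K + 1),
        f (x i) (θ K) ≤ f xs θs + s i + L * (qg ^ i * B) + L * (qg ^ K * B) := by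
      intro i _
      have htri : ‖θ K - θ i‖ ≤ qg ^ K * B + qg ^ i * B := by
        have h : θ K - θ i = (θ K - θs) - (θ i - θs) := by abel
        calc ‖θ K - θ i‖ = ‖(θ K - θs) - (θ i - θs)‖ := by rw [h]
          _ ≤ ‖θ K - θs‖ + ‖θ i - θs‖ := norm_sub_le _ _
          _ ≤ qg ^ K * B + qg ^ i * B := add_le_add (hbθ K) (hbθ i)
      have hl := hLip' (x i) (hxX i) (θ K) (hθΘ K) (θ i) (hθΘ i)
      have := (abs_le.mp hl).2
      have h2 : L * ‖θ K - θ i‖ ≤ L * (qg ^ K * B + qg ^ i * B) :=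
        mul_le_mul_of_nonneg_left htri hL0
      simp only [hsdef]
      linarith
    -- sum up
    have hup : f (xbar K) (θ K) - f xs θs ≤ (A K)⁻¹ * E + L * (qg ^ K * B) := by
      have hsum : ∑ i ∈ Finset.range (K + 1), w i * f (x i) (θ K)
          ≤ ∑ i ∈ Finset.range (K + 1),
              (w i * (f xs θs + L * (qg ^ K * B)) + (A K)⁻¹ * (γf i * s i)
                + ((A K)⁻¹ * L) * (γf i * (qg ^ i * B))) := by
        apply Finset.sum_le_sum
        intro i hi
        have h1 := mul_le_mul_of_nonneg_left (hpt i hi) (hw0 i hi)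
        calc w i * f (x i) (θ K)
            ≤ w i * (f xs θs + s i + L * (qg ^ i * B) + L * (qg ^ K * B)) := h1
          _ = w i * (f xs θs + L * (qg ^ K * B)) + (A K)⁻¹ * (γf i * s i)
                + ((A K)⁻¹ * L) * (γf i * (qg ^ i * B)) := by
              simp only [hwdef]; ring
      have hsplit : ∑ i ∈ Finset.range (K + 1),
          (w i * (f xs θs + L * (qg ^ K * B)) + (A K)⁻¹ * (γf i * s i)
            + ((A K)⁻¹ * L) * (γf i * (qg ^ i * B)))
          = (f xs θs + L * (qg ^ K * B))
            + (A K)⁻¹ * (∑ i ∈ Finset.range (K + 1), (γf i * s i))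
            + ((A K)⁻¹ * L) * (∑ i ∈ Finset.range (K + 1), (γf i * (qg ^ i * B))) := by
        rw [Finset.sum_add_distrib, Finset.sum_add_distrib, ← Finset.sum_mul,
          hw1, ← Finset.mul_sum, ← Finset.mul_sum, one_mul]
      rw [hsplit] at hsum
      have hb1 : (A K)⁻¹ * (∑ i ∈ Finset.range (K + 1), (γf i * s i)) ≤ (A K)⁻¹ * (C / 2) :=
        mul_le_mul_of_nonneg_left (hCsum (K + 1)) hAinv0
      have hb2 : ((A K)⁻¹ * L) * (∑ i ∈ Finset.range (K + 1), (γf i * (qg ^ i * B)))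
          ≤ ((A K)⁻¹ * L) * D :=
        mul_le_mul_of_nonneg_left (hDsum (K + 1)) (mul_nonneg hAinv0 hL0)
      have hEeq : (A K)⁻¹ * E = (A K)⁻¹ * (C / 2) + ((A K)⁻¹ * L) * D := by
        simp only [hEdef]; ring
      have := hjensen
      rw [hEeq]
      linarith
    -- lower bound
    have hlow : -(L * (qg ^ K * B)) ≤ f (xbar K) (θ K) - f xs θs := by
      have hmin := hxsmin (xbar K) hxbarX
      have hl := hLip' (xbar K) hxbarX (θ K) (hθΘ K) θs hθsΘ
      have h2 : L * ‖θ K - θs‖ ≤ L * (qg ^ K * B) :=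
        mul_le_mul_of_nonneg_left (hbθ K) hL0
      have := (abs_le.mp hl).1
      linarith
    have hEnn : 0 ≤ (A K)⁻¹ * E := mul_nonneg hAinv0 hE0
    rw [abs_le]
    constructor
    · linarith
    · exact hup
  -- limit of the bound
  have hUlim : Tendsto (fun K => (A K)⁻¹ * E + L * (qg ^ K * B)) atTop (𝓝 0) := by
    have h1 : Tendsto (fun K => (A K)⁻¹) atTop (𝓝 0) := hAtop.inv_tendsto_atTop
    have h1' : Tendsto (fun K => (A K)⁻¹ * E) atTop (𝓝 0) := by
      have := h1.mul_const E; simpa using this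
    have h2 : Tendsto (fun K : ℕ => qg ^ K) atTop (𝓝 0) :=
      tendsto_pow_atTop_nhds_zero_of_lt_one (le_of_lt hqg0) hqg1
    have h2' : Tendsto (fun K => L * (qg ^ K * B)) atTop (𝓝 0) := by
      have := (h2.mul_const B).const_mul L; simpa using this
    have := h1'.add h2'; simpa using this
  -- conclusion via squeeze
  apply squeeze_zero' (Eventually.of_forall fun K => abs_nonneg _) _ hUlim
  filter_upwards [hAtop.eventually_gt_atTop 0] with K hA
  exact hbound K hA
end

section
/- Let (x_k, z_k, θ_k) be generated by the joint extragradient scheme with steplength τ > 0, and let x* be any solution of VI(X, F(·,θ*)). Then for all k: ‖x_{k+1} − x*‖² ≤ ‖x_k − x*‖² − (1 − τ² L_{F,x}²) ‖z_{k+1} − x_k‖² + 2τ L_{F,θ} ‖θ_k − θ*‖ ‖x* − z_{k+1}‖. -/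
open Filter Topology RealInnerProductSpace

lemma proj_vi {E : Type*} [NormedAddCommGroup E] [InnerProductSpace ℝ E]
    {K : Set E} (hK : Convex ℝ K) {p : E} (y : E) (hp : p ∈ K)
    (hmin : ∀ v ∈ K, ‖y - p‖ ≤ ‖y - v‖) {w : E} (hw : w ∈ K) :
    ⟪y - p, w - p⟫ ≤ 0 := by
  by_contra hcon
  push_neg at hcon
  have key : ∀ t : ℝ, 0 < t → t ≤ 1 →
      2 * t * ⟪y - p, w - p⟫ ≤ t ^ 2 * ‖w - p‖ ^ 2 := by
    intro t ht0 ht1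
    have hc' : p + t • (w - p) ∈ K := hK.add_smul_sub_mem hp hw ⟨ht0.le, ht1⟩
    have h1 := hmin _ hc'
    have h2 : ‖y - p‖ ^ 2 ≤ ‖y - (p + t • (w - p))‖ ^ 2 :=
      pow_le_pow_left₀ (norm_nonneg _) h1 2
    have h3 : y - (p + t • (w - p)) = (y - p) - t • (w - p) := by abel
    have h4 : ‖t • (w - p)‖ ^ 2 = t ^ 2 * ‖w - p‖ ^ 2 := by
      rw [norm_smul, Real.norm_eq_abs, mul_pow, sq_abs]
    have h5 : ‖(y - p) - t • (w - p)‖ ^ 2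
        = ‖y - p‖ ^ 2 - 2 * (t * ⟪y - p, w - p⟫) + t ^ 2 * ‖w - p‖ ^ 2 := by
      rw [norm_sub_sq_real, real_inner_smul_right, h4]
    rw [h3, h5] at h2
    linarith
  have hC0 : (0:ℝ) ≤ ‖w - p‖ ^ 2 := by positivity
  rcases eq_or_lt_of_le hC0 with h0 | hpos
  · have := key 1 one_pos le_rfl
    rw [← h0] at this
    linarith
  · set I := ⟪y - p, w - p⟫ with hI
    set C := ‖w - p‖ ^ 2 with hCdef
    set t := min 1 (I / C) with htdef
    have ht0 : 0 < t := lt_min one_pos (div_pos hcon hpos)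
    have ht1 : t ≤ 1 := min_le_left _ _
    have h5 := key t ht0 ht1
    have h6 : t ≤ I / C := min_le_right _ _
    have h7 : t * C ≤ I := by
      have := mul_le_mul_of_nonneg_right h6 hpos.le
      rwa [div_mul_cancel₀ _ hpos.ne'] at this
    have h8 : t ^ 2 * C ≤ t * I := by
      calc t ^ 2 * C = t * (t * C) := by ring
        _ ≤ t * I := mul_le_mul_of_nonneg_left h7 ht0.le
    nlinarith [mul_pos ht0 hcon]



set_option maxHeartbeats 1000000 in
/-- Basic inequality for the joint extragradient scheme: for any solution `x*` of
`VI(X, F(·,θ*))` and all `k`,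
`‖x_{k+1} − x*‖² ≤ ‖x_k − x*‖² − (1 − τ²L_{F,x}²)‖z_{k+1} − x_k‖²
  + 2τ L_{F,θ} ‖θ_k − θ*‖ ‖x* − z_{k+1}‖`. -/
theorem stmt_12
    {n m : ℕ}
    (X : Set (EuclideanSpace ℝ (Fin n))) (Θ : Set (EuclideanSpace ℝ (Fin m)))
    (hXne : X.Nonempty) (hXcl : IsClosed X) (hXcv : Convex ℝ X)
    (hΘne : Θ.Nonempty) (hΘcl : IsClosed Θ) (hΘcv : Convex ℝ Θ)
    (F : EuclideanSpace ℝ (Fin n) → EuclideanSpace ℝ (Fin m) → EuclideanSpace ℝ (Fin n))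
    (g : EuclideanSpace ℝ (Fin m) → ℝ)
    (gradg : EuclideanSpace ℝ (Fin m) → EuclideanSpace ℝ (Fin m))
    -- g is continuously differentiable and strongly convex with minimizer θ*
    (hgdiff : ∀ ϑ, HasGradientAt g (gradg ϑ) ϑ)
    (hggradcont : Continuous gradg)
    (ηg : ℝ) (hηg : 0 < ηg) (hstrg : StrongConvexOn Θ ηg g)
    (θs : EuclideanSpace ℝ (Fin m)) (hθsΘ : θs ∈ Θ) (hθsmin : ∀ ϑ ∈ Θ, g θs ≤ g ϑ)
    -- monotonicity and Lipschitz continuity of F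
    (hmono : ∀ x1 ∈ X, ∀ x2 ∈ X, 0 ≤ ⟪F x1 θs - F x2 θs, x1 - x2⟫)
    (LFx LFθ : ℝ)
    (hLipFx : ∀ θ' ∈ Θ, ∀ x1 ∈ X, ∀ x2 ∈ X, ‖F x1 θ' - F x2 θ'‖ ≤ LFx * ‖x1 - x2‖)
    (hLipFθ : ∀ y ∈ X, ∀ θ1 ∈ Θ, ∀ θ2 ∈ Θ, ‖F y θ1 - F y θ2‖ ≤ LFθ * ‖θ1 - θ2‖)
    -- x* solves VI(X, F(·,θ*))
    (xs : EuclideanSpace ℝ (Fin n)) (hxsX : xs ∈ X)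
    (hxsVI : ∀ y ∈ X, 0 ≤ ⟪F xs θs, y - xs⟫)
    -- Euclidean projections onto X and Θ
    (PX : EuclideanSpace ℝ (Fin n) → EuclideanSpace ℝ (Fin n))
    (PΘ : EuclideanSpace ℝ (Fin m) → EuclideanSpace ℝ (Fin m))
    (hPX : ∀ y, PX y ∈ X ∧ ∀ z ∈ X, ‖y - PX y‖ ≤ ‖y - z‖)
    (hPΘ : ∀ y, PΘ y ∈ Θ ∧ ∀ z ∈ Θ, ‖y - PΘ y‖ ≤ ‖y - z‖)
    -- steplengths
    (τ γg : ℝ) (hτ : 0 < τ) (hγg : 0 < γg)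
    -- the joint extragradient scheme
    (x z : ℕ → EuclideanSpace ℝ (Fin n)) (θ : ℕ → EuclideanSpace ℝ (Fin m))
    (hx0 : x 0 ∈ X) (hθ0 : θ 0 ∈ Θ)
    (hzit : ∀ k, z (k + 1) = PX (x k - τ • F (x k) (θ k)))
    (hxit : ∀ k, x (k + 1) = PX (x k - τ • F (z (k + 1)) (θ k)))
    (hθit : ∀ k, θ (k + 1) = PΘ (θ k - γg • gradg (θ k))) :
    ∀ k : ℕ,
      ‖x (k + 1) - xs‖ ^ 2 ≤
        ‖x k - xs‖ ^ 2 - (1 - τ ^ 2 * LFx ^ 2) * ‖z (k + 1) - x k‖ ^ 2 +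
          2 * τ * LFθ * ‖θ k - θs‖ * ‖xs - z (k + 1)‖ := by
  have hxX : ∀ k, x k ∈ X := by
    intro k
    induction k with
    | zero => exact hx0
    | succ j ih => rw [hxit j]; exact (hPX _).1
  have hθΘ : ∀ k, θ k ∈ Θ := by
    intro k
    induction k with
    | zero => exact hθ0
    | succ j ih => rw [hθit j]; exact (hPΘ _).1
  have hzX : ∀ k, z (k + 1) ∈ X := by
    intro k; rw [hzit k]; exact (hPX _).1
  intro k
  set a := x k with ha
  set u := x (k + 1) with hu
  set w := z (k + 1) with hw
  set t := θ k with ht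
  set F1 := F a t with hF1
  set F2 := F w t with hF2
  -- projection variational inequalities
  have P1 : ⟪(a - τ • F2) - u, xs - u⟫ ≤ 0 := by
    rw [hu, hxit k]
    exact proj_vi hXcv _ (hPX _).1 (hPX _).2 hxsX
  have P2 : ⟪(a - τ • F1) - w, u - w⟫ ≤ 0 := by
    rw [hw, hzit k]
    exact proj_vi hXcv _ (hPX _).1 (hPX _).2 (hxX (k + 1))
  set s := xs with hs
  -- algebraic identities
  have i1 : ‖u - s‖ ^ 2 = ‖a - s‖ ^ 2 - ‖a - u‖ ^ 2 + 2 * ⟪a - u, s - u⟫ := by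
    have e1 : u - s = (a - s) - (a - u) := by abel
    have e2 : ⟪a - u, a - s⟫ + ⟪a - u, s - u⟫ = ‖a - u‖ ^ 2 := by
      rw [← inner_add_right, show (a - s) + (s - u) = a - u by abel,
        real_inner_self_eq_norm_sq]
    rw [e1, norm_sub_sq_real]
    linarith [real_inner_comm (a - s) (a - u)]
  have i2 : ⟪(a - τ • F2) - u, s - u⟫ = ⟪a - u, s - u⟫ - τ * ⟪F2, s - u⟫ := by
    rw [show (a - τ • F2) - u = (a - u) - τ • F2 by abel, inner_sub_left,
      real_inner_smul_left]
  have i3 : ⟪F2, s - u⟫ = ⟪F2, s - w⟫ + ⟪F2, w - u⟫ := by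
    rw [← inner_add_right, show (s - w) + (w - u) = s - u by abel]
  have i5 : ⟪(a - τ • F1) - w, u - w⟫ = ⟪a - w, u - w⟫ - τ * ⟪F1, u - w⟫ := by
    rw [show (a - τ • F1) - w = (a - w) - τ • F1 by abel, inner_sub_left,
      real_inner_smul_left]
  have i5b : ⟪F1, u - w⟫ = -⟪F1, w - u⟫ := by
    rw [show u - w = -(w - u) by abel, inner_neg_right]
  have i6 : ‖a - u‖ ^ 2 = ‖a - w‖ ^ 2 + 2 * ⟪a - w, w - u⟫ + ‖w - u‖ ^ 2 := by
    rw [show a - u = (a - w) + (w - u) by abel, norm_add_sq_real]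
  have i6b : ⟪a - w, u - w⟫ = -⟪a - w, w - u⟫ := by
    rw [show u - w = -(w - u) by abel, inner_neg_right]
  have keyeq : ‖u - s‖ ^ 2 = ‖a - s‖ ^ 2 - ‖a - w‖ ^ 2 - ‖w - u‖ ^ 2
      + 2 * ⟪(a - τ • F2) - u, s - u⟫ + 2 * ⟪(a - τ • F1) - w, u - w⟫
      + 2 * τ * ⟪F2, s - w⟫ + 2 * τ * ⟪F2, w - u⟫ - 2 * τ * ⟪F1, w - u⟫ := by
    linear_combination i1 - 2 * i2 + 2 * τ * i3 - 2 * i5 + 2 * τ * i5b - i6 - 2 * i6b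
  -- bound on the θ-perturbation term
  have hQ1 : ⟪F2, s - w⟫ ≤ LFθ * ‖t - θs‖ * ‖s - w‖ := by
    have split : ⟪F2, s - w⟫ = ⟪F2 - F w θs, s - w⟫
        + ⟪F w θs - F s θs, s - w⟫ + ⟪F s θs, s - w⟫ := by
      simp only [inner_sub_left]; ring
    have d2 : ⟪F w θs - F s θs, s - w⟫ = -⟪F w θs - F s θs, w - s⟫ := by
      rw [show s - w = -(w - s) by abel, inner_neg_right]
    have d3 : ⟪F s θs, s - w⟫ = -⟪F s θs, w - s⟫ := by
      rw [show s - w = -(w - s) by abel, inner_neg_right]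
    have hM : 0 ≤ ⟪F w θs - F s θs, w - s⟫ := hmono w (hzX k) s hxsX
    have hV : 0 ≤ ⟪F s θs, w - s⟫ := hxsVI w (hzX k)
    have cs : ⟪F2 - F w θs, s - w⟫ ≤ ‖F2 - F w θs‖ * ‖s - w‖ := real_inner_le_norm _ _
    have lip : ‖F2 - F w θs‖ ≤ LFθ * ‖t - θs‖ := hLipFθ w (hzX k) t (hθΘ k) θs hθsΘ
    have cs2 : ‖F2 - F w θs‖ * ‖s - w‖ ≤ LFθ * ‖t - θs‖ * ‖s - w‖ :=
      mul_le_mul_of_nonneg_right lip (norm_nonneg _)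
    linarith
  -- bound on the extragradient mismatch term
  have h3 : 2 * τ * ⟪F2, w - u⟫ - 2 * τ * ⟪F1, w - u⟫
      ≤ τ ^ 2 * LFx ^ 2 * ‖w - a‖ ^ 2 + ‖w - u‖ ^ 2 := by
    have e : ⟪F2 - F1, w - u⟫ = ⟪F2, w - u⟫ - ⟪F1, w - u⟫ := inner_sub_left _ _ _
    have cs : ⟪F2 - F1, w - u⟫ ≤ ‖F2 - F1‖ * ‖w - u‖ := real_inner_le_norm _ _
    have lip : ‖F2 - F1‖ ≤ LFx * ‖w - a‖ := hLipFx t (hθΘ k) w (hzX k) a (hxX k)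
    have cs2 : ‖F2 - F1‖ * ‖w - u‖ ≤ LFx * ‖w - a‖ * ‖w - u‖ :=
      mul_le_mul_of_nonneg_right lip (norm_nonneg _)
    have am : 2 * τ * (LFx * ‖w - a‖ * ‖w - u‖)
        ≤ τ ^ 2 * LFx ^ 2 * ‖w - a‖ ^ 2 + ‖w - u‖ ^ 2 := by
      nlinarith [sq_nonneg (τ * LFx * ‖w - a‖ - ‖w - u‖)]
    have step : ⟪F2, w - u⟫ - ⟪F1, w - u⟫ ≤ LFx * ‖w - a‖ * ‖w - u‖ := by
      rw [← e]; exact le_trans cs cs2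
    have step2 : 2 * τ * (⟪F2, w - u⟫ - ⟪F1, w - u⟫) ≤ 2 * τ * (LFx * ‖w - a‖ * ‖w - u‖) :=
      mul_le_mul_of_nonneg_left step (by positivity)
    linarith
  have hQ1' : 2 * τ * ⟪F2, s - w⟫ ≤ 2 * τ * (LFθ * ‖t - θs‖ * ‖s - w‖) :=
    mul_le_mul_of_nonneg_left hQ1 (by positivity)
  have hrev : ‖a - w‖ = ‖w - a‖ := norm_sub_rev _ _
  calc ‖u - s‖ ^ 2
      ≤ ‖a - s‖ ^ 2 - ‖a - w‖ ^ 2 - ‖w - u‖ ^ 2 + 2 * 0 + 2 * 0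
        + 2 * τ * (LFθ * ‖t - θs‖ * ‖s - w‖)
        + (τ ^ 2 * LFx ^ 2 * ‖w - a‖ ^ 2 + ‖w - u‖ ^ 2) := by
        rw [keyeq]; linarith
    _ = ‖a - s‖ ^ 2 - (1 - τ ^ 2 * LFx ^ 2) * ‖w - a‖ ^ 2
        + 2 * τ * LFθ * ‖t - θs‖ * ‖s - w‖ := by rw [hrev]; ring
end

section
/- Let x_k^t be the solution of the regularized problem VI(X, F(·,θ_k) + ε_k I) and z_k^t the solution of VI(X, F(·,θ*) + ε_k I), where θ_k are the learning iterates with constant steplength 0 < γ_g < 2/G_g so that ‖θ_k − θ*‖ ≤ q_g^k ‖θ₀ − θ*‖ with q_g ∈ (0,1). If q_g^k/ε_k → 0 as k → ∞, then ‖x_k^t − z_k^t‖ ≤ (L_{F,θ}/ε_k) q_g^k ‖θ₀ − θ*‖ for all k, and in particular ‖x_k^t − z_k^t‖ → 0 as k → ∞. -/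
/-!
Adding the variational inequalities of the two regularized problems, each tested at the other's
solution, and using monotonicity of `F(·,θ*)` gives
`ε_k ‖x_k^t − z_k^t‖² ≤ ⟪F(x_k^t,θ_k) − F(x_k^t,θ*), z_k^t − x_k^t⟫`, so by Cauchy–Schwarz
`ε_k ‖x_k^t − z_k^t‖ ≤ ‖F(x_k^t,θ_k) − F(x_k^t,θ*)‖ ≤ L_{F,θ} ‖θ_k − θ*‖`. The geometric rate of the
learning iterates finishes the estimate, and `q_g^k / ε_k → 0` gives the limit.
-/

open Filter Topology RealInnerProductSpace

section VariationalInequality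

variable {E : Type*} [NormedAddCommGroup E] [InnerProductSpace ℝ E]

/-- `x` solves `VI(X, A)`. -/
def IsVISolution (X : Set E) (A : E → E) (x : E) : Prop :=
  x ∈ X ∧ ∀ y ∈ X, 0 ≤ ⟪A x, y - x⟫

theorem IsVISolution.smul_norm_sub_le {X : Set E} {A B : E → E} {ε : ℝ} {x z : E}
    (hx : IsVISolution X (fun y => A y + ε • y) x) (hz : IsVISolution X (fun y => B y + ε • y) z)
    (hB : 0 ≤ ⟪B x - B z, x - z⟫) :
    ε * ‖x - z‖ ≤ ‖A x - B x‖ := by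
  have hsum : 0 ≤ ⟪A x + ε • x, z - x⟫ + ⟪B z + ε • z, x - z⟫ :=
    add_nonneg (hx.2 z hz.1) (hz.2 x hx.1)
  have hexpand : ⟪A x + ε • x, z - x⟫ + ⟪B z + ε • z, x - z⟫
      = ⟪A x - B x, z - x⟫ - ⟪B x - B z, x - z⟫ - ε * (‖x - z‖ * ‖x - z‖) := by
    rw [← real_inner_self_eq_norm_mul_norm]
    simp only [inner_add_left, inner_sub_left, inner_sub_right, real_inner_smul_left]
    ring
  have hsq : ε * ‖x - z‖ * ‖x - z‖ ≤ ‖A x - B x‖ * ‖x - z‖ :=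
    calc ε * ‖x - z‖ * ‖x - z‖ ≤ ⟪A x - B x, z - x⟫ := by linarith
      _ ≤ ‖A x - B x‖ * ‖z - x‖ := real_inner_le_norm _ _
      _ = ‖A x - B x‖ * ‖x - z‖ := by rw [norm_sub_rev z x]
  rcases (norm_nonneg (x - z)).eq_or_lt with hxz | hxz
  · rw [← hxz, mul_zero]
    exact norm_nonneg _
  · exact le_of_mul_le_mul_right hsq hxz

end VariationalInequality

theorem mul_le_mul_of_le_of_mul_nonneg {α : Type*} [Ring α] [LinearOrder α] [IsStrictOrderedRing α]
    {L a b : α} (ha : 0 ≤ a) (hab : a ≤ b) (hLb : 0 ≤ L * b) : L * a ≤ L * b := by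
  rcases le_or_gt 0 L with hL | hL
  · exact mul_le_mul_of_nonneg_left hab hL
  · have hb : b = 0 := le_antisymm (nonpos_of_mul_nonneg_right hLb hL) (ha.trans hab)
    rw [hb, le_antisymm (hb ▸ hab) ha]

theorem stmt_14_general
    {n m : ℕ}
    (X : Set (EuclideanSpace ℝ (Fin n))) (Θ : Set (EuclideanSpace ℝ (Fin m)))
    (F : EuclideanSpace ℝ (Fin n) → EuclideanSpace ℝ (Fin m) → EuclideanSpace ℝ (Fin n))
    (gradg : EuclideanSpace ℝ (Fin m) → EuclideanSpace ℝ (Fin m))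
    (θs : EuclideanSpace ℝ (Fin m)) (hθsΘ : θs ∈ Θ)
    -- monotonicity and Lipschitz continuity of F
    (hmono : ∀ x1 ∈ X, ∀ x2 ∈ X, 0 ≤ ⟪F x1 θs - F x2 θs, x1 - x2⟫)
    (LFθ : ℝ)
    (hLipFθ : ∀ y ∈ X, ∀ θ1 ∈ Θ, ∀ θ2 ∈ Θ, ‖F y θ1 - F y θ2‖ ≤ LFθ * ‖θ1 - θ2‖)
    -- Euclidean projection onto Θ and the learning iterates with their geometric rate
    (PΘ : EuclideanSpace ℝ (Fin m) → EuclideanSpace ℝ (Fin m))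
    (hPΘ : ∀ y, PΘ y ∈ Θ ∧ ∀ z ∈ Θ, ‖y - PΘ y‖ ≤ ‖y - z‖)
    (γg : ℝ)
    (θ : ℕ → EuclideanSpace ℝ (Fin m)) (hθ0 : θ 0 ∈ Θ)
    (hθit : ∀ k, θ (k + 1) = PΘ (θ k - γg • gradg (θ k)))
    (qg : ℝ) (hqg0 : 0 < qg)
    (hθrate : ∀ k, ‖θ k - θs‖ ≤ qg ^ k * ‖θ 0 - θs‖)
    -- regularization parameters
    (ε : ℕ → ℝ) (hε : ∀ k, 0 < ε k)
    (hqgε : Tendsto (fun k => qg ^ k / ε k) atTop (𝓝 0))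
    -- the Tikhonov trajectories
    (xt zt : ℕ → EuclideanSpace ℝ (Fin n))
    (hxt : ∀ k, xt k ∈ X ∧ ∀ y ∈ X, 0 ≤ ⟪F (xt k) (θ k) + ε k • xt k, y - xt k⟫)
    (hzt : ∀ k, zt k ∈ X ∧ ∀ y ∈ X, 0 ≤ ⟪F (zt k) θs + ε k • zt k, y - zt k⟫) :
    (∀ k, ‖xt k - zt k‖ ≤ LFθ / ε k * qg ^ k * ‖θ 0 - θs‖) ∧
      Tendsto (fun k => ‖xt k - zt k‖) atTop (𝓝 0) := by
  have hθΘ : ∀ k, θ k ∈ Θ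
    | 0 => hθ0
    | k + 1 => hθit k ▸ (hPΘ _).1
  have hbound : ∀ k, ‖xt k - zt k‖ ≤ LFθ / ε k * qg ^ k * ‖θ 0 - θs‖ := by
    intro k
    have hLθ0 : 0 ≤ LFθ * ‖θ 0 - θs‖ :=
      (norm_nonneg _).trans (hLipFθ (xt 0) (hxt 0).1 (θ 0) hθ0 θs hθsΘ)
    have hreg : ε k * ‖xt k - zt k‖ ≤ LFθ * (qg ^ k * ‖θ 0 - θs‖) :=
      calc ε k * ‖xt k - zt k‖ ≤ ‖F (xt k) (θ k) - F (xt k) θs‖ :=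
            IsVISolution.smul_norm_sub_le (A := (F · (θ k))) (B := (F · θs)) (hxt k) (hzt k)
              (hmono _ (hxt k).1 _ (hzt k).1)
        _ ≤ LFθ * ‖θ k - θs‖ := hLipFθ _ (hxt k).1 _ (hθΘ k) _ hθsΘ
        _ ≤ LFθ * (qg ^ k * ‖θ 0 - θs‖) :=
            mul_le_mul_of_le_of_mul_nonneg (norm_nonneg _) (hθrate k)
              (by rw [mul_left_comm]; exact mul_nonneg (pow_nonneg hqg0.le k) hLθ0)
    rw [div_mul_eq_mul_div, div_mul_eq_mul_div, le_div_iff₀ (hε k), mul_assoc]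
    linarith
  refine ⟨hbound, squeeze_zero (fun k => norm_nonneg _) (fun k => (hbound k).trans_eq ?_)
    (by simpa using hqgε.const_mul (LFθ * ‖θ 0 - θs‖))⟩
  ring

/-- Comparison of the Tikhonov trajectories `x_k^t` (solving `VI(X, F(·,θ_k) + ε_k I)`)
and `z_k^t` (solving `VI(X, F(·,θ*) + ε_k I)`):
`‖x_k^t − z_k^t‖ ≤ (L_{F,θ}/ε_k) q_g^k ‖θ₀ − θ*‖` and, if `q_g^k/ε_k → 0`,
`‖x_k^t − z_k^t‖ → 0`. -/
theorem stmt_14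
    {n m : ℕ}
    (X : Set (EuclideanSpace ℝ (Fin n))) (Θ : Set (EuclideanSpace ℝ (Fin m)))
    (hXne : X.Nonempty) (hXcl : IsClosed X) (hXcv : Convex ℝ X)
    (hΘne : Θ.Nonempty) (hΘcl : IsClosed Θ) (hΘcv : Convex ℝ Θ)
    (F : EuclideanSpace ℝ (Fin n) → EuclideanSpace ℝ (Fin m) → EuclideanSpace ℝ (Fin n))
    (g : EuclideanSpace ℝ (Fin m) → ℝ)
    (gradg : EuclideanSpace ℝ (Fin m) → EuclideanSpace ℝ (Fin m))
    -- g is continuously differentiable and strongly convex with minimizer θ*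
    (hgdiff : ∀ ϑ, HasGradientAt g (gradg ϑ) ϑ)
    (hggradcont : Continuous gradg)
    (ηg Gg : ℝ) (hηg : 0 < ηg) (hGg : 0 < Gg)
    (hstrg : StrongConvexOn Θ ηg g)
    (hLipg : ∀ θ1 θ2, ‖gradg θ1 - gradg θ2‖ ≤ Gg * ‖θ1 - θ2‖)
    (θs : EuclideanSpace ℝ (Fin m)) (hθsΘ : θs ∈ Θ) (hθsmin : ∀ ϑ ∈ Θ, g θs ≤ g ϑ)
    -- monotonicity and Lipschitz continuity of F
    (hmono : ∀ x1 ∈ X, ∀ x2 ∈ X, 0 ≤ ⟪F x1 θs - F x2 θs, x1 - x2⟫)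
    (LFx LFθ : ℝ)
    (hLipFx : ∀ θ' ∈ Θ, ∀ x1 ∈ X, ∀ x2 ∈ X, ‖F x1 θ' - F x2 θ'‖ ≤ LFx * ‖x1 - x2‖)
    (hLipFθ : ∀ y ∈ X, ∀ θ1 ∈ Θ, ∀ θ2 ∈ Θ, ‖F y θ1 - F y θ2‖ ≤ LFθ * ‖θ1 - θ2‖)
    -- Euclidean projection onto Θ and the learning iterates with their geometric rate
    (PΘ : EuclideanSpace ℝ (Fin m) → EuclideanSpace ℝ (Fin m))
    (hPΘ : ∀ y, PΘ y ∈ Θ ∧ ∀ z ∈ Θ, ‖y - PΘ y‖ ≤ ‖y - z‖)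
    (γg : ℝ) (hγg0 : 0 < γg) (hγg2 : γg < 2 / Gg)
    (θ : ℕ → EuclideanSpace ℝ (Fin m)) (hθ0 : θ 0 ∈ Θ)
    (hθit : ∀ k, θ (k + 1) = PΘ (θ k - γg • gradg (θ k)))
    (qg : ℝ) (hqg0 : 0 < qg) (hqg1 : qg < 1)
    (hθrate : ∀ k, ‖θ k - θs‖ ≤ qg ^ k * ‖θ 0 - θs‖)
    -- regularization parameters
    (ε : ℕ → ℝ) (hε : ∀ k, 0 < ε k)
    (hqgε : Tendsto (fun k => qg ^ k / ε k) atTop (𝓝 0))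
    -- the Tikhonov trajectories
    (xt zt : ℕ → EuclideanSpace ℝ (Fin n))
    (hxt : ∀ k, xt k ∈ X ∧ ∀ y ∈ X, 0 ≤ ⟪F (xt k) (θ k) + ε k • xt k, y - xt k⟫)
    (hzt : ∀ k, zt k ∈ X ∧ ∀ y ∈ X, 0 ≤ ⟪F (zt k) θs + ε k • zt k, y - zt k⟫) :
    (∀ k, ‖xt k - zt k‖ ≤ LFθ / ε k * qg ^ k * ‖θ 0 - θs‖) ∧
      Tendsto (fun k => ‖xt k - zt k‖) atTop (𝓝 0) :=
  stmt_14_general X Θ F gradg θs hθsΘ hmono LFθ hLipFθ PΘ hPΘ γg θ hθ0 hθit qg hqg0 hθrate ε hε hqgε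
    xt zt hxt hzt
end

section
/- Let x_k be generated by the regularized projection scheme x_{k+1} = Π_X(x_k − γ_{f,k}(F(x_k,θ_k) + ε_k x_k)), and let x_k^t denote the solution of VI(X, F(·,θ_k) + ε_k I). Then for all k: ‖x_{k+1} − x_k^t‖ ≤ q_k ‖x_k − x_{k−1}^t‖ + (q_k L_{F,θ} q_g^{k−1} C_g)/ε_k + (M q_k/ε_k)|ε_{k−1} − ε_k|, where q_k = (1 + γ_{f,k}²(L_{F,x} + ε_k)² − 2γ_{f,k}ε_k)^{1/2}, C_g = ‖θ₀ − θ*‖(1 + q_g), and M = sup_{x∈X} ‖x‖. -/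
open Filter Topology RealInnerProductSpace


section helpers
variable {E : Type*} [NormedAddCommGroup E] [InnerProductSpace ℝ E]

lemma proj_inner_le {K : Set E} (hK : Convex ℝ K) {P : E → E}
    (hP : ∀ y, P y ∈ K ∧ ∀ z ∈ K, ‖y - P y‖ ≤ ‖y - z‖) (w : E) :
    ∀ y ∈ K, ⟪w - P w, y - P w⟫ ≤ 0 := by
  haveI : Nonempty K := ⟨⟨P w, (hP w).1⟩⟩
  have hmin : ‖w - P w‖ = ⨅ z : K, ‖w - (z : E)‖ := by
    refine le_antisymm (le_ciInf fun z => (hP w).2 z z.2) ?_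
    have hbd : BddBelow (Set.range fun z : K => ‖w - (z : E)‖) := by
      refine ⟨0, ?_⟩
      rintro r ⟨z, rfl⟩
      positivity
    exact ciInf_le hbd ⟨P w, (hP w).1⟩
  exact (norm_eq_iInf_iff_real_inner_le_zero hK (hP w).1).mp hmin

lemma proj_eq_of_inner {K : Set E} (hK : Convex ℝ K) {P : E → E}
    (hP : ∀ y, P y ∈ K ∧ ∀ z ∈ K, ‖y - P y‖ ≤ ‖y - z‖) (w z : E)
    (hz : z ∈ K) (h : ∀ y ∈ K, ⟪w - z, y - z⟫ ≤ 0) : P w = z := by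
  have h1 := proj_inner_le hK hP w z hz
  have h2 := h (P w) (hP w).1
  have key : ‖z - P w‖ ^ 2 = ⟪w - P w, z - P w⟫ + ⟪w - z, P w - z⟫ := by
    simp only [← real_inner_self_eq_norm_sq, inner_sub_left, inner_sub_right]
    rw [real_inner_comm z (P w)]
    ring
  have hn : ‖z - P w‖ = 0 := by nlinarith [norm_nonneg (z - P w)]
  exact (norm_sub_eq_zero_iff.mp hn).symm

lemma proj_nonexp {K : Set E} (hK : Convex ℝ K) {P : E → E}
    (hP : ∀ y, P y ∈ K ∧ ∀ z ∈ K, ‖y - P y‖ ≤ ‖y - z‖) (a b : E) :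
    ‖P a - P b‖ ≤ ‖a - b‖ := by
  have h1 := proj_inner_le hK hP a (P b) (hP b).1
  have h2 := proj_inner_le hK hP b (P a) (hP a).1
  have hlow : ‖P a - P b‖ ^ 2 ≤ ⟪a - b, P a - P b⟫ := by
    have expand : ⟪a - b, P a - P b⟫ - ‖P a - P b‖ ^ 2
        = -⟪a - P a, P b - P a⟫ - ⟪b - P b, P a - P b⟫ := by
      simp only [← real_inner_self_eq_norm_sq, inner_sub_left, inner_sub_right]
      rw [real_inner_comm (P a) (P b)]
      ring
    linarith
  have hcs := real_inner_le_norm (a - b) (P a - P b)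
  nlinarith [norm_nonneg (P a - P b), norm_nonneg (a - b)]

lemma div_bound_aux {e B d : ℝ} (he : 0 < e) (hB : 0 ≤ B) (hd : 0 ≤ d)
    (h : e * d ^ 2 ≤ B * d) : d * e ≤ B := by
  rcases eq_or_lt_of_le hd with h0 | h0
  · rw [← h0]; simpa using hB
  · nlinarith

end helpers


/-- Contraction inequality for the regularized projection scheme: with
`q_k = (1 + γ_{f,k}²(L_{F,x} + ε_k)² − 2γ_{f,k}ε_k)^{1/2}` and
`C_g = ‖θ₀ − θ*‖(1 + q_g)`, for every `k` (writing `k ↦ k+1` for the paper's `k ≥ 1`),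
`‖x_{k+2} − x_{k+1}^t‖ ≤ q_{k+1}‖x_{k+1} − x_k^t‖ + (q_{k+1} L_{F,θ} q_g^k C_g)/ε_{k+1}
  + (M q_{k+1}/ε_{k+1})|ε_k − ε_{k+1}|`. -/
theorem stmt_16
    {n m : ℕ}
    (X : Set (EuclideanSpace ℝ (Fin n))) (Θ : Set (EuclideanSpace ℝ (Fin m)))
    (hXne : X.Nonempty) (hXcl : IsClosed X) (hXcv : Convex ℝ X) (hXcp : IsCompact X)
    (hΘne : Θ.Nonempty) (hΘcl : IsClosed Θ) (hΘcv : Convex ℝ Θ)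
    (M : ℝ) (hMX : ∀ y ∈ X, ‖y‖ ≤ M)
    (F : EuclideanSpace ℝ (Fin n) → EuclideanSpace ℝ (Fin m) → EuclideanSpace ℝ (Fin n))
    (g : EuclideanSpace ℝ (Fin m) → ℝ)
    (gradg : EuclideanSpace ℝ (Fin m) → EuclideanSpace ℝ (Fin m))
    -- g is continuously differentiable and strongly convex with minimizer θ*
    (hgdiff : ∀ ϑ, HasGradientAt g (gradg ϑ) ϑ)
    (hggradcont : Continuous gradg)
    (ηg Gg : ℝ) (hηg : 0 < ηg) (hGg : 0 < Gg)
    (hstrg : StrongConvexOn Θ ηg g)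
    (hLipg : ∀ θ1 θ2, ‖gradg θ1 - gradg θ2‖ ≤ Gg * ‖θ1 - θ2‖)
    (θs : EuclideanSpace ℝ (Fin m)) (hθsΘ : θs ∈ Θ) (hθsmin : ∀ ϑ ∈ Θ, g θs ≤ g ϑ)
    -- monotonicity (for each θ ∈ Θ) and Lipschitz continuity of F
    (hmono : ∀ θ' ∈ Θ, ∀ x1 ∈ X, ∀ x2 ∈ X, 0 ≤ ⟪F x1 θ' - F x2 θ', x1 - x2⟫)
    (LFx LFθ : ℝ)
    (hLipFx : ∀ θ' ∈ Θ, ∀ x1 ∈ X, ∀ x2 ∈ X, ‖F x1 θ' - F x2 θ'‖ ≤ LFx * ‖x1 - x2‖)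
    (hLipFθ : ∀ y ∈ X, ∀ θ1 ∈ Θ, ∀ θ2 ∈ Θ, ‖F y θ1 - F y θ2‖ ≤ LFθ * ‖θ1 - θ2‖)
    -- Euclidean projections onto X and Θ
    (PX : EuclideanSpace ℝ (Fin n) → EuclideanSpace ℝ (Fin n))
    (PΘ : EuclideanSpace ℝ (Fin m) → EuclideanSpace ℝ (Fin m))
    (hPX : ∀ y, PX y ∈ X ∧ ∀ z ∈ X, ‖y - PX y‖ ≤ ‖y - z‖)
    (hPΘ : ∀ y, PΘ y ∈ Θ ∧ ∀ z ∈ Θ, ‖y - PΘ y‖ ≤ ‖y - z‖)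
    -- the learning iterates with their geometric rate
    (γg : ℝ) (hγg0 : 0 < γg) (hγg2 : γg < 2 / Gg)
    (θ : ℕ → EuclideanSpace ℝ (Fin m)) (hθ0 : θ 0 ∈ Θ)
    (hθit : ∀ k, θ (k + 1) = PΘ (θ k - γg • gradg (θ k)))
    (qg : ℝ) (hqg0 : 0 < qg) (hqg1 : qg < 1)
    (hθrate : ∀ k, ‖θ k - θs‖ ≤ qg ^ k * ‖θ 0 - θs‖)
    -- steplengths and regularization parameters
    (γf ε : ℕ → ℝ) (hγf : ∀ k, 0 < γf k) (hε : ∀ k, 0 < ε k)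
    -- the regularized projection scheme
    (x : ℕ → EuclideanSpace ℝ (Fin n)) (hx0 : x 0 ∈ X)
    (hxit : ∀ k, x (k + 1) = PX (x k - γf k • (F (x k) (θ k) + ε k • x k)))
    -- the Tikhonov trajectory
    (xt : ℕ → EuclideanSpace ℝ (Fin n))
    (hxt : ∀ k, xt k ∈ X ∧ ∀ y ∈ X, 0 ≤ ⟪F (xt k) (θ k) + ε k • xt k, y - xt k⟫)
    -- the contraction factors and the constant C_g
    (q : ℕ → ℝ)
    (hq : ∀ k, q k = Real.sqrt (1 + (γf k) ^ 2 * (LFx + ε k) ^ 2 - 2 * γf k * ε k))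
    (Cg : ℝ) (hCg : Cg = ‖θ 0 - θs‖ * (1 + qg)) :
    ∀ k : ℕ,
      ‖x (k + 2) - xt (k + 1)‖ ≤
        q (k + 1) * ‖x (k + 1) - xt k‖ +
          q (k + 1) * LFθ * qg ^ k * Cg / ε (k + 1) +
          M * q (k + 1) / ε (k + 1) * |ε k - ε (k + 1)| := by
  intro k
  have hθmem : ∀ j, θ j ∈ Θ := by
    intro j
    cases j with
    | zero => exact hθ0
    | succ i => rw [hθit i]; exact (hPΘ _).1
  have hvX := (hxt (k+1)).1
  have hwX := (hxt k).1
  have huX : x (k+1) ∈ X := by rw [hxit k]; exact (hPX _).1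
  have hqnn : 0 ≤ q (k+1) := by rw [hq]; exact Real.sqrt_nonneg _
  have he : 0 < ε (k+1) := hε (k+1)
  have hγ : 0 < γf (k+1) := hγf (k+1)
  have hM0 : 0 ≤ M := by
    obtain ⟨y, hy⟩ := hXne
    exact le_trans (norm_nonneg y) (hMX y hy)
  -- Step A: contraction of one projected step
  have hvfix : PX (xt (k+1) - γf (k+1) • (F (xt (k+1)) (θ (k+1)) + ε (k+1) • xt (k+1)))
      = xt (k+1) := by
    apply proj_eq_of_inner hXcv hPX _ _ hvX
    intro y hy
    have h0 := (hxt (k+1)).2 y hy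
    have hrw : xt (k+1) - γf (k+1) • (F (xt (k+1)) (θ (k+1)) + ε (k+1) • xt (k+1)) - xt (k+1)
        = (-γf (k+1)) • (F (xt (k+1)) (θ (k+1)) + ε (k+1) • xt (k+1)) := by module
    rw [hrw, real_inner_smul_left]
    have := mul_nonneg (le_of_lt (hγf (k+1))) h0
    linarith
  have hA : ‖x (k+2) - xt (k+1)‖ ≤ q (k+1) * ‖x (k+1) - xt (k+1)‖ := by
    have hne : ‖x (k+2) - xt (k+1)‖ ≤
        ‖(x (k+1) - γf (k+1) • (F (x (k+1)) (θ (k+1)) + ε (k+1) • x (k+1)))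
          - (xt (k+1) - γf (k+1) • (F (xt (k+1)) (θ (k+1)) + ε (k+1) • xt (k+1)))‖ := by
      conv_lhs => rw [show k + 2 = (k+1) + 1 from rfl, hxit (k+1), ← hvfix]
      exact proj_nonexp hXcv hPX _ _
    set d := x (k+1) - xt (k+1) with hd
    set Δ := F (x (k+1)) (θ (k+1)) - F (xt (k+1)) (θ (k+1)) with hΔ
    set s := Δ + ε (k+1) • d with hs
    have hab : (x (k+1) - γf (k+1) • (F (x (k+1)) (θ (k+1)) + ε (k+1) • x (k+1)))
        - (xt (k+1) - γf (k+1) • (F (xt (k+1)) (θ (k+1)) + ε (k+1) • xt (k+1)))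
        = d - γf (k+1) • s := by
      rw [hs, hΔ, hd]; module
    rw [hab] at hne
    have hsq : ‖d - γf (k+1) • s‖ ^ 2
        = ‖d‖ ^ 2 - 2 * γf (k+1) * ⟪s, d⟫ + γf (k+1) ^ 2 * ‖s‖ ^ 2 := by
      rw [norm_sub_sq_real, real_inner_smul_right, norm_smul, Real.norm_eq_abs,
        abs_of_pos hγ, real_inner_comm d s]
      ring
    have h2 := hmono (θ (k+1)) (hθmem (k+1)) (x (k+1)) huX (xt (k+1)) hvX
    rw [← hd, ← hΔ] at h2
    have hmonos : ε (k+1) * ‖d‖ ^ 2 ≤ ⟪s, d⟫ := by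
      have h1 : ⟪s, d⟫ = ⟪Δ, d⟫ + ε (k+1) * ‖d‖ ^ 2 := by
        rw [hs, inner_add_left, real_inner_smul_left, real_inner_self_eq_norm_sq]
      linarith
    have h3 := hLipFx (θ (k+1)) (hθmem (k+1)) (x (k+1)) huX (xt (k+1)) hvX
    rw [← hd, ← hΔ] at h3
    have hsnorm : ‖s‖ ≤ (LFx + ε (k+1)) * ‖d‖ := by
      calc ‖s‖ ≤ ‖Δ‖ + ‖ε (k+1) • d‖ := norm_add_le _ _
        _ = ‖Δ‖ + ε (k+1) * ‖d‖ := by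
            rw [norm_smul, Real.norm_eq_abs, abs_of_pos he]
        _ ≤ (LFx + ε (k+1)) * ‖d‖ := by linarith
    have hs2 : ‖s‖ * ‖s‖ ≤ ((LFx + ε (k+1)) * ‖d‖) * ((LFx + ε (k+1)) * ‖d‖) :=
      mul_self_le_mul_self (norm_nonneg s) hsnorm
    have hfin2 : ‖d - γf (k+1) • s‖ ^ 2
        ≤ (1 + γf (k+1) ^ 2 * (LFx + ε (k+1)) ^ 2 - 2 * γf (k+1) * ε (k+1)) * ‖d‖ ^ 2 := by
      have hint1 := mul_le_mul_of_nonneg_left hmonos (by positivity : (0:ℝ) ≤ 2 * γf (k+1))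
      have hint2 := mul_le_mul_of_nonneg_left hs2 (sq_nonneg (γf (k+1)))
      linarith [hsq]
    calc ‖x (k+2) - xt (k+1)‖ ≤ ‖d - γf (k+1) • s‖ := hne
      _ = Real.sqrt (‖d - γf (k+1) • s‖ ^ 2) := (Real.sqrt_sq (norm_nonneg _)).symm
      _ ≤ Real.sqrt ((1 + γf (k+1) ^ 2 * (LFx + ε (k+1)) ^ 2 - 2 * γf (k+1) * ε (k+1)) * ‖d‖ ^ 2) :=
          Real.sqrt_le_sqrt hfin2
      _ = q (k+1) * ‖d‖ := by
          rw [hq, Real.sqrt_mul' _ (sq_nonneg _), Real.sqrt_sq (norm_nonneg _)]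
  -- Step B: perturbation of the Tikhonov solutions
  have h1 := (hxt k).2 (xt (k+1)) hvX
  have h2 := (hxt (k+1)).2 (xt k) hwX
  have hm2 := hmono (θ (k+1)) (hθmem (k+1)) (xt k) hwX (xt (k+1)) hvX
  have hid : ⟪F (xt k) (θ k) + ε k • xt k, xt (k+1) - xt k⟫
      + ⟪F (xt (k+1)) (θ (k+1)) + ε (k+1) • xt (k+1), xt k - xt (k+1)⟫
      = ⟪F (xt k) (θ k) - F (xt k) (θ (k+1)), xt (k+1) - xt k⟫
        - ⟪F (xt k) (θ (k+1)) - F (xt (k+1)) (θ (k+1)), xt k - xt (k+1)⟫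
        + (ε k - ε (k+1)) * ⟪xt k, xt (k+1) - xt k⟫
        - ε (k+1) * ‖xt (k+1) - xt k‖ ^ 2 := by
    simp only [← real_inner_self_eq_norm_sq, inner_add_left, inner_sub_left, inner_sub_right,
      real_inner_smul_left]
    rw [real_inner_comm (xt k) (xt (k+1))]
    ring
  have hkey : ε (k+1) * ‖xt (k+1) - xt k‖ ^ 2
      ≤ ⟪F (xt k) (θ k) - F (xt k) (θ (k+1)), xt (k+1) - xt k⟫
        + (ε k - ε (k+1)) * ⟪xt k, xt (k+1) - xt k⟫ := by linarith
  have hFθ := hLipFθ (xt k) hwX (θ k) (hθmem k) (θ (k+1)) (hθmem (k+1))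
  have hcs1 := real_inner_le_norm (F (xt k) (θ k) - F (xt k) (θ (k+1))) (xt (k+1) - xt k)
  have hcs2 := abs_real_inner_le_norm (xt k) (xt (k+1) - xt k)
  have hwM := hMX (xt k) hwX
  have hLn : 0 ≤ LFθ * ‖θ k - θ (k+1)‖ := le_trans (norm_nonneg _) hFθ
  have hB : ‖xt (k+1) - xt k‖ * ε (k+1) ≤ LFθ * ‖θ k - θ (k+1)‖ + |ε k - ε (k+1)| * M := by
    have habs : (ε k - ε (k+1)) * ⟪xt k, xt (k+1) - xt k⟫
        ≤ |ε k - ε (k+1)| * (M * ‖xt (k+1) - xt k‖) := by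
      calc (ε k - ε (k+1)) * ⟪xt k, xt (k+1) - xt k⟫
          ≤ |(ε k - ε (k+1)) * ⟪xt k, xt (k+1) - xt k⟫| := le_abs_self _
        _ = |ε k - ε (k+1)| * |⟪xt k, xt (k+1) - xt k⟫| := abs_mul _ _
        _ ≤ |ε k - ε (k+1)| * (M * ‖xt (k+1) - xt k‖) := by
            apply mul_le_mul_of_nonneg_left _ (abs_nonneg _)
            calc |⟪xt k, xt (k+1) - xt k⟫| ≤ ‖xt k‖ * ‖xt (k+1) - xt k‖ := hcs2
              _ ≤ M * ‖xt (k+1) - xt k‖ :=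
                  mul_le_mul_of_nonneg_right hwM (norm_nonneg _)
    have hF1 : ⟪F (xt k) (θ k) - F (xt k) (θ (k+1)), xt (k+1) - xt k⟫
        ≤ LFθ * ‖θ k - θ (k+1)‖ * ‖xt (k+1) - xt k‖ :=
      le_trans hcs1 (mul_le_mul_of_nonneg_right hFθ (norm_nonneg _))
    refine div_bound_aux he (add_nonneg hLn (mul_nonneg (abs_nonneg _) hM0))
      (norm_nonneg _) ?_
    linarith [hkey, hF1, habs]
  -- Step C: bound on the θ increment
  have hC : LFθ * ‖θ k - θ (k+1)‖ ≤ LFθ * (qg ^ k * Cg) := by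
    rcases le_or_gt 0 LFθ with hL | hL
    · apply mul_le_mul_of_nonneg_left _ hL
      have t1 := hθrate k
      have t2 := hθrate (k+1)
      have tri : ‖θ k - θ (k+1)‖ ≤ ‖θ k - θs‖ + ‖θ (k+1) - θs‖ := by
        have h := norm_sub_le (θ k - θs) (θ (k+1) - θs)
        rwa [sub_sub_sub_cancel_right] at h
      rw [pow_succ] at t2
      rw [hCg]
      nlinarith [t1, t2, tri]
    · have hsing : ∀ θ1 ∈ Θ, ∀ θ2 ∈ Θ, θ1 = θ2 := by
        intro θ1 hθ1 θ2 hθ2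
        have hle := hLipFθ (xt k) hwX θ1 hθ1 θ2 hθ2
        have hn := norm_nonneg (F (xt k) θ1 - F (xt k) θ2)
        have h12 : ‖θ1 - θ2‖ = 0 := by
          refine le_antisymm ?_ (norm_nonneg _)
          by_contra hpos
          push_neg at hpos
          have := mul_neg_of_neg_of_pos hL hpos
          linarith
        exact norm_sub_eq_zero_iff.mp h12
      have e1 : θ k = θ (k+1) := hsing _ (hθmem k) _ (hθmem (k+1))
      have e2 : θ 0 = θs := hsing _ hθ0 _ hθsΘ
      rw [e1, hCg, e2]
      simp
  -- Combine
  have tri2 : ‖x (k+1) - xt (k+1)‖ ≤ ‖x (k+1) - xt k‖ + ‖xt (k+1) - xt k‖ := by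
    have h := norm_sub_le (x (k+1) - xt k) (xt (k+1) - xt k)
    rwa [sub_sub_sub_cancel_right] at h
  have hBdiv : ‖xt (k+1) - xt k‖
      ≤ (LFθ * (qg ^ k * Cg) + |ε k - ε (k+1)| * M) / ε (k+1) := by
    rw [le_div_iff₀ he]
    linarith
  have hmain : ‖x (k+2) - xt (k+1)‖
      ≤ q (k+1) * (‖x (k+1) - xt k‖ + (LFθ * (qg ^ k * Cg) + |ε k - ε (k+1)| * M) / ε (k+1)) := by
    refine le_trans hA (mul_le_mul_of_nonneg_left ?_ hqnn)
    linarith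
  refine le_trans hmain (le_of_eq ?_)
  field_simp
  ring
end
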